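/- arXiv:2105.00188 — 16 statements merged into one kernel-verified Lean document; each statement's English description precedes it below -/
import Mathlib

section
/- In any ℓr-multimagma (X,⊙,ℓ,r) the following hold for all x, y ∈ X: (compatibility) ℓ(r x) = r x and r(ℓ x) = ℓ x; (retraction) ℓ(ℓ x) = ℓ x and r(r x) = r x; (idempotency) (ℓ x) ⊙ (ℓ x) = {ℓ x}; (commutativity) (r x) ⊙ (ℓ y) = (ℓ y) ⊙ (r x); (export) ℓ((ℓ x) ⊙ y) = (ℓ x) ⊙ (ℓ y) and r(x ⊙ (r y)) = (r x) ⊙ (r y), where ℓ and r are applied to the sets (ℓ x) ⊙ y and x ⊙ (r y) as images; (weak twisted) ℓ(x ⊙ y) ⊙ {x} ⊆ x ⊙ (ℓ y) and {x} ⊙ r(y ⊙ x) ⊆ (r y) ⊙ x. -/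
open Set

/-- The extension of a multioperation to sets: `A ⊙ B = ⋃ {x ⊙ y | x ∈ A, y ∈ B}`. -/
def mprod {X : Type*} (m : X → X → Set X) (A B : Set X) : Set X :=
  ⋃ x ∈ A, ⋃ y ∈ B, m x y

/-- In any ℓr-multimagma, the compatibility, retraction, idempotency, commutativity,
export and weak twisted laws hold. -/
theorem stmt0 {X : Type*} (m : X → X → Set X) (l r : X → X)
    (hD : ∀ x y, m x y ≠ ∅ → r x = l y)
    (hl : ∀ x, m (l x) x = {x})
    (hr : ∀ x, m x (r x) = {x}) :
    (∀ x, l (r x) = r x) ∧ (∀ x, r (l x) = l x) ∧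
    (∀ x, l (l x) = l x) ∧ (∀ x, r (r x) = r x) ∧
    (∀ x, m (l x) (l x) = {l x}) ∧
    (∀ x y, m (r x) (l y) = m (l y) (r x)) ∧
    (∀ x y, l '' (m (l x) y) = m (l x) (l y)) ∧
    (∀ x y, r '' (m x (r y)) = m (r x) (r y)) ∧
    (∀ x y, mprod m (l '' (m x y)) {x} ⊆ m x (l y)) ∧
    (∀ x y, mprod m {x} (r '' (m y x)) ⊆ m (r y) x) := by
  have h1 : ∀ x, r (l x) = l x := fun x =>
    hD (l x) x (by rw [hl]; exact singleton_ne_empty x)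
  have h2 : ∀ x, l (r x) = r x := fun x =>
    (hD x (r x) (by rw [hr]; exact singleton_ne_empty x)).symm
  have h3 : ∀ x, l (l x) = l x := fun x => by
    conv_lhs => rw [← h1 x]
    rw [h2, h1]
  have h4 : ∀ x, r (r x) = r x := fun x => by
    conv_lhs => rw [← h2 x]
    rw [h1, h2]
  have hidem : ∀ x, m (l x) (l x) = {l x} := fun x => by
    have := hr (l x); rwa [h1] at this
  have hidemr : ∀ x, m (r x) (r x) = {r x} := fun x => by
    have := hl (r x); rwa [h2] at this
  refine ⟨h2, h1, h3, h4, hidem, ?_, ?_, ?_, ?_, ?_⟩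
  · intro x y
    by_cases hne : (m (r x) (l y)).Nonempty
    · have h := hD _ _ hne.ne_empty
      rw [h4, h3] at h
      rw [h]
    · by_cases hne2 : (m (l y) (r x)).Nonempty
      · have h := hD _ _ hne2.ne_empty
        rw [h1, h2] at h
        exfalso
        apply hne
        rw [← h, hidem y]
        exact singleton_nonempty _
      · rw [not_nonempty_iff_eq_empty] at hne hne2
        rw [hne, hne2]
  · intro x y
    by_cases h : (m (l x) y).Nonempty
    · have hxy := hD _ _ h.ne_empty
      rw [h1] at hxy
      rw [hxy, hl y, Set.image_singleton, hidem y]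
    · have he : m (l x) y = ∅ := not_nonempty_iff_eq_empty.mp h
      rw [he, Set.image_empty]
      symm
      rw [← not_nonempty_iff_eq_empty]
      intro hne
      have hxy := hD _ _ hne.ne_empty
      rw [h1, h3] at hxy
      rw [hxy, hl] at he
      exact singleton_ne_empty y he
  · intro x y
    by_cases h : (m x (r y)).Nonempty
    · have hxy := hD _ _ h.ne_empty
      rw [h2] at hxy
      rw [← hxy, hr x, Set.image_singleton, hxy, hidemr y]
    · have he : m x (r y) = ∅ := not_nonempty_iff_eq_empty.mp h
      rw [he, Set.image_empty]
      symm
      rw [← not_nonempty_iff_eq_empty]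
      intro hne
      have hxy := hD _ _ hne.ne_empty
      rw [h4, h2] at hxy
      rw [← hxy, hr] at he
      exact singleton_ne_empty x he
  · intro x y w hw
    simp only [mprod, mem_iUnion, mem_image, mem_singleton_iff, exists_prop] at hw
    obtain ⟨a, ⟨z, hz, rfl⟩, b, hb, hw⟩ := hw
    rw [hb] at hw
    have hzy : r x = l y := hD x y (nonempty_of_mem hz).ne_empty
    have hlz : r (l z) = l x := hD _ _ (nonempty_of_mem hw).ne_empty
    rw [h1] at hlz
    rw [hlz, hl x] at hw
    rw [← hzy, hr x]
    exact hw
  · intro x y w hw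
    simp only [mprod, mem_iUnion, mem_image, mem_singleton_iff, exists_prop] at hw
    obtain ⟨a, ha, b, ⟨z, hz, rfl⟩, hw⟩ := hw
    rw [ha] at hw
    have hzy : r y = l x := hD y x (nonempty_of_mem hz).ne_empty
    have hrz : r x = r z := by
      have := hD _ _ (nonempty_of_mem hw).ne_empty
      rwa [h2] at this
    rw [← hrz, hr x] at hw
    rw [hzy, hl x]
    exact hw
end

section
/- In any local ℓr-multisemigroup, for all x, y: (equational locality) ℓ(x ⊙ y) = ℓ(x ⊙ ℓ y) and r(x ⊙ y) = r((r x) ⊙ y); (twisted laws) ℓ(x ⊙ y) ⊙ {x} = x ⊙ (ℓ y) and {y} ⊙ r(x ⊙ y) = (r x) ⊙ y. -/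
open Set

/-- In any local ℓr-multisemigroup, the equational locality laws and the twisted laws hold. -/
theorem stmt2 {X : Type*} (m : X → X → Set X) (l r : X → X)
    (hassoc : ∀ x y z : X, (⋃ v ∈ m y z, m x v) = ⋃ u ∈ m x y, m u z)
    (hD : ∀ x y, m x y ≠ ∅ → r x = l y)
    (hl : ∀ x, m (l x) x = {x})
    (hr : ∀ x, m x (r x) = {x})
    (hloc : ∀ x y, r x = l y → m x y ≠ ∅) :
    (∀ x y, l '' (m x y) = l '' (m x (l y))) ∧
    (∀ x y, r '' (m x y) = r '' (m (r x) y)) ∧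
    (∀ x y, mprod m (l '' (m x y)) {x} = m x (l y)) ∧
    (∀ x y, mprod m {y} (r '' (m x y)) = m (r x) y) := by
  have key : ∀ u x y, u ∈ m x y → l u = l x ∧ r u = r y := by
    intro u x y hu
    constructor
    · have h1 := hassoc (l u) x y
      have hu1 : u ∈ ⋃ v ∈ m x y, m (l u) v :=
        mem_biUnion hu (by rw [hl]; exact mem_singleton u)
      rw [h1] at hu1
      obtain ⟨w, hw, _⟩ := mem_iUnion₂.mp hu1
      have hne : m (l u) x ≠ ∅ := nonempty_iff_ne_empty.mp ⟨w, hw⟩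
      have h2 := hD _ _ hne
      have h3 := hD (l u) u (by rw [hl]; exact singleton_ne_empty u)
      rw [← h3]; exact h2
    · have h1 := hassoc x y (r u)
      have hu1 : u ∈ ⋃ w ∈ m x y, m w (r u) :=
        mem_biUnion hu (by rw [hr]; exact mem_singleton u)
      rw [← h1] at hu1
      obtain ⟨v, hv, _⟩ := mem_iUnion₂.mp hu1
      have hne : m y (r u) ≠ ∅ := nonempty_iff_ne_empty.mp ⟨v, hv⟩
      have h2 := hD _ _ hne
      have h3 := hD u (r u) (by rw [hr]; exact singleton_ne_empty u)
      rw [← h3] at h2; exact h2.symm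
  have ll : ∀ y, l (l y) = l y := fun y =>
    ((key y (l y) y (by rw [hl]; exact mem_singleton y)).1).symm
  have rr : ∀ x, r (r x) = r x := fun x =>
    ((key x x (r x) (by rw [hr]; exact mem_singleton x)).2).symm
  have limg : ∀ x y, m x y ≠ ∅ → l '' (m x y) = {l x} := by
    intro x y hne
    apply Subset.antisymm
    · rintro _ ⟨u, hu, rfl⟩; exact (key u x y hu).1
    · obtain ⟨u, hu⟩ := nonempty_iff_ne_empty.mpr hne
      rintro z hz
      rw [mem_singleton_iff] at hz
      exact ⟨u, hu, hz ▸ (key u x y hu).1⟩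
  have rimg : ∀ x y, m x y ≠ ∅ → r '' (m x y) = {r y} := by
    intro x y hne
    apply Subset.antisymm
    · rintro _ ⟨u, hu, rfl⟩; exact (key u x y hu).2
    · obtain ⟨u, hu⟩ := nonempty_iff_ne_empty.mpr hne
      rintro z hz
      rw [mem_singleton_iff] at hz
      exact ⟨u, hu, hz ▸ (key u x y hu).2⟩
  have memp : ∀ x y, r x ≠ l y → m x y = ∅ := by
    intro x y h
    by_contra h'
    exact h (hD x y h')
  have msing : ∀ a b : X, mprod m {a} {b} = m a b := by
    intro a b; unfold mprod; simp
  have mempA : ∀ B : Set X, mprod m ∅ B = ∅ := by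
    intro B; unfold mprod; simp
  have mempB : ∀ A : Set X, mprod m A ∅ = ∅ := by
    intro A; unfold mprod; simp
  refine ⟨?_, ?_, ?_, ?_⟩
  · intro x y
    by_cases h : r x = l y
    · rw [limg x y (hloc x y h), limg x (l y) (hloc x (l y) (h.trans (ll y).symm))]
    · rw [memp x y h, memp x (l y) (fun hc => h (hc.trans (ll y)))]
  · intro x y
    by_cases h : r x = l y
    · rw [rimg x y (hloc x y h), rimg (r x) y (hloc (r x) y ((rr x).trans h))]
    · rw [memp x y h, memp (r x) y (fun hc => h ((rr x).symm.trans hc))]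
  · intro x y
    by_cases h : r x = l y
    · rw [limg x y (hloc x y h), msing, hl, ← h, hr]
    · rw [memp x y h, image_empty, mempA,
        memp x (l y) (fun hc => h (hc.trans (ll y)))]
  · intro x y
    by_cases h : r x = l y
    · rw [rimg x y (hloc x y h), msing, hr, h, hl]
    · rw [memp x y h, image_empty, mempB,
        memp (r x) y (fun hc => h ((rr x).symm.trans hc))]
end

section
/- An ℓr-multisemigroup is local (i.e. r x = ℓ y → x ⊙ y ≠ ∅ for all x, y) if and only if the inclusions ℓ(x ⊙ ℓ y) ⊆ ℓ(x ⊙ y) and r((r x) ⊙ y) ⊆ r(x ⊙ y) hold for all x, y. -/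
open Set

/-- An ℓr-multisemigroup is local iff the inclusions `ℓ(x ⊙ ℓ y) ⊆ ℓ(x ⊙ y)` and
`r((r x) ⊙ y) ⊆ r(x ⊙ y)` hold. -/
theorem stmt3 {X : Type*} (m : X → X → Set X) (l r : X → X)
    (hassoc : ∀ x y z : X, (⋃ v ∈ m y z, m x v) = ⋃ u ∈ m x y, m u z)
    (hD : ∀ x y, m x y ≠ ∅ → r x = l y)
    (hl : ∀ x, m (l x) x = {x})
    (hr : ∀ x, m x (r x) = {x}) :
    (∀ x y, r x = l y → m x y ≠ ∅) ↔
      (∀ x y, l '' (m x (l y)) ⊆ l '' (m x y)) ∧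
      (∀ x y, r '' (m (r x) y) ⊆ r '' (m x y)) := by
  -- basic facts
  have hrl : ∀ x : X, r (l x) = l x := fun x =>
    hD (l x) x (by rw [hl]; exact (singleton_nonempty x).ne_empty)
  have hlr : ∀ x : X, l (r x) = r x := fun x =>
    (hD x (r x) (by rw [hr]; exact (singleton_nonempty x).ne_empty)).symm
  have hll : ∀ x : X, l (l x) = l x := by
    intro x
    have h1 : m (l x) (l x) = {l x} := by
      have := hr (l x); rwa [hrl x] at this
    have := hD (l x) (l x) (by rw [h1]; exact (singleton_nonempty _).ne_empty)
    rw [hrl x] at this; exact this.symm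
  have hrr : ∀ x : X, r (r x) = r x := by
    intro x
    have h1 : m (r x) (r x) = {r x} := by
      have := hl (r x); rwa [hlr x] at this
    have := hD (r x) (r x) (by rw [h1]; exact (singleton_nonempty _).ne_empty)
    rw [hlr x] at this; exact this
  -- l of a product element is l of the left factor
  have hA : ∀ x y u : X, u ∈ m x y → l u = l x := by
    intro x y u hu
    have h1 : u ∈ ⋃ v ∈ m x y, m (l u) v := by
      refine mem_biUnion hu ?_
      rw [hl]; exact mem_singleton u
    rw [hassoc] at h1
    simp only [mem_iUnion] at h1
    obtain ⟨w, hw, -⟩ := h1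
    have hne : m (l u) x ≠ ∅ := (nonempty_of_mem hw).ne_empty
    have h2 := hD (l u) x hne
    rw [hrl u] at h2; exact h2
  have hB : ∀ x y u : X, u ∈ m x y → r u = r y := by
    intro x y u hu
    have h1 : u ∈ ⋃ w ∈ m x y, m w (r u) := by
      refine mem_biUnion hu ?_
      rw [hr]; exact mem_singleton u
    rw [← hassoc] at h1
    simp only [mem_iUnion] at h1
    obtain ⟨w, hw, -⟩ := h1
    have hne : m y (r u) ≠ ∅ := (nonempty_of_mem hw).ne_empty
    have h2 := hD y (r u) hne
    rw [hlr u] at h2; exact h2.symm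
  constructor
  · intro hloc
    constructor
    · intro x y z hz
      obtain ⟨u, hu, rfl⟩ := hz
      have hne : m x (l y) ≠ ∅ := (nonempty_of_mem hu).ne_empty
      have h1 : r x = l y := by rw [hD x (l y) hne, hll]
      obtain ⟨w, hw⟩ := nonempty_iff_ne_empty.mpr (hloc x y h1)
      refine ⟨w, hw, ?_⟩
      rw [hA x y w hw, hA x (l y) u hu]
    · intro x y z hz
      obtain ⟨u, hu, rfl⟩ := hz
      have hne : m (r x) y ≠ ∅ := (nonempty_of_mem hu).ne_empty
      have h1 : r x = l y := by rw [← hD (r x) y hne, hrr]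
      obtain ⟨w, hw⟩ := nonempty_iff_ne_empty.mpr (hloc x y h1)
      refine ⟨w, hw, ?_⟩
      rw [hB x y w hw, hB (r x) y u hu]
  · rintro ⟨h1, -⟩ x y hxy
    have hx : x ∈ m x (l y) := by rw [← hxy, hr]; exact mem_singleton x
    have : l x ∈ l '' m x y := h1 x y ⟨x, hx, rfl⟩
    obtain ⟨w, hw, -⟩ := this
    exact (nonempty_of_mem hw).ne_empty
end

section
/- In any ℓr-multimagma: (1) r x = ℓ y if and only if (r x) ⊙ (ℓ y) ≠ ∅, and x ⊙ y ≠ ∅ implies (r x) ⊙ (ℓ y) ≠ ∅. (2) If the structure is moreover a local ℓr-multisemigroup, then (r x) ⊙ (ℓ y) ≠ ∅ implies x ⊙ y ≠ ∅. -/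
open Set

/-- In any ℓr-multimagma, `r x = ℓ y` iff `(r x) ⊙ (ℓ y) ≠ ∅`, and `x ⊙ y ≠ ∅` implies
`(r x) ⊙ (ℓ y) ≠ ∅`. If the structure is moreover a local ℓr-multisemigroup, then
`(r x) ⊙ (ℓ y) ≠ ∅` implies `x ⊙ y ≠ ∅`. -/
theorem stmt4 {X : Type*} (m : X → X → Set X) (l r : X → X)
    (hD : ∀ x y, m x y ≠ ∅ → r x = l y)
    (hl : ∀ x, m (l x) x = {x})
    (hr : ∀ x, m x (r x) = {x}) :
    ((∀ x y, r x = l y ↔ m (r x) (l y) ≠ ∅) ∧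
     (∀ x y, m x y ≠ ∅ → m (r x) (l y) ≠ ∅)) ∧
    ((∀ x y z : X, (⋃ v ∈ m y z, m x v) = ⋃ u ∈ m x y, m u z) →
     (∀ x y, r x = l y → m x y ≠ ∅) →
     ∀ x y, m (r x) (l y) ≠ ∅ → m x y ≠ ∅) := by
  have hlr : ∀ x, l (r x) = r x := fun x =>
    (hD x (r x) (by rw [hr]; exact singleton_ne_empty x)).symm
  have hrl : ∀ x, r (l x) = l x := fun x =>
    hD (l x) x (by rw [hl]; exact singleton_ne_empty x)
  have hrr : ∀ x, r (r x) = r x := by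
    intro x
    have h := hl (r x)
    rw [hlr x] at h
    have := hD (r x) (r x) (by rw [h]; exact singleton_ne_empty _)
    rw [hlr x] at this; exact this
  have hll : ∀ x, l (l x) = l x := by
    intro x
    have h := hr (l x)
    rw [hrl x] at h
    have := hD (l x) (l x) (by rw [h]; exact singleton_ne_empty _)
    rw [hrl x] at this; exact this.symm
  have key : ∀ x y, r x = l y ↔ m (r x) (l y) ≠ ∅ := by
    intro x y
    constructor
    · intro h
      rw [h]
      have h2 := hr (l y)
      rw [hrl y] at h2
      rw [h2]; exact singleton_ne_empty _
    · intro h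
      have := hD _ _ h
      rwa [hrr, hll] at this
  refine ⟨⟨key, fun x y h => (key x y).mp (hD x y h)⟩, ?_⟩
  intro _ hloc x y h
  exact hloc x y ((key x y).mpr h)
end

section
/- In any multimonoid (X,⊙,E), each element has precisely one left unit and one right unit in E: if e, e' ∈ E, x ∈ e ⊙ x and x ∈ e' ⊙ x, then e = e'; dually, if e, e' ∈ E, x ∈ x ⊙ e and x ∈ x ⊙ e', then e = e'. -/
open Set

/-- In any multimonoid `(X,⊙,E)`, each element has precisely one left unit and one
right unit in `E`. -/
theorem stmt5 {X : Type*} (m : X → X → Set X) (E : Set X)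
    (hassoc : ∀ x y z : X, (⋃ v ∈ m y z, m x v) = ⋃ u ∈ m x y, m u z)
    (hE1 : ∀ x : X, (⋃ e ∈ E, m e x) = {x})
    (hE2 : ∀ x : X, (⋃ e ∈ E, m x e) = {x}) :
    (∀ e e' x : X, e ∈ E → e' ∈ E → x ∈ m e x → x ∈ m e' x → e = e') ∧
    (∀ e e' x : X, e ∈ E → e' ∈ E → x ∈ m x e → x ∈ m x e' → e = e') := by
  have key : ∀ e e' : X, e ∈ E → e' ∈ E → (m e' e).Nonempty → e = e' := by
    rintro e e' he he' ⟨w, hw⟩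
    have h1 : w ∈ ({e} : Set X) := by
      rw [← hE1 e]; exact mem_iUnion₂.2 ⟨e', he', hw⟩
    have h2 : w ∈ ({e'} : Set X) := by
      rw [← hE2 e']; exact mem_iUnion₂.2 ⟨e, he, hw⟩
    simp only [mem_singleton_iff] at h1 h2
    rw [← h1, ← h2]
  constructor
  · intro e e' x he he' hx hx'
    apply key e e' he he'
    have hmem : x ∈ ⋃ v ∈ m e x, m e' v := mem_iUnion₂.2 ⟨x, hx, hx'⟩
    rw [hassoc e' e x] at hmem
    obtain ⟨u, hu, -⟩ := mem_iUnion₂.1 hmem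
    exact ⟨u, hu⟩
  · intro e e' x he he' hx hx'
    refine (key e' e he' he ?_).symm
    have hmem : x ∈ ⋃ u ∈ m x e, m u e' := mem_iUnion₂.2 ⟨x, hx, hx'⟩
    rw [← hassoc x e e'] at hmem
    obtain ⟨v, hv, -⟩ := mem_iUnion₂.1 hmem
    exact ⟨v, hv⟩
end

section
/- In any multimonoid (X,⊙,E), composability forces matching units: if e, e' ∈ E, x ∈ x ⊙ e, y ∈ e' ⊙ y, and x ⊙ y ≠ ∅, then e = e'. -/
open Set

/-- In any multimonoid `(X,⊙,E)`, composability forces matching units: if `e, e' ∈ E`,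
`x ∈ x ⊙ e`, `y ∈ e' ⊙ y` and `x ⊙ y ≠ ∅`, then `e = e'`. -/
theorem stmt6 {X : Type*} (m : X → X → Set X) (E : Set X)
    (hassoc : ∀ x y z : X, (⋃ v ∈ m y z, m x v) = ⋃ u ∈ m x y, m u z)
    (hE1 : ∀ x : X, (⋃ e ∈ E, m e x) = {x})
    (hE2 : ∀ x : X, (⋃ e ∈ E, m x e) = {x}) :
    ∀ e e' x y : X, e ∈ E → e' ∈ E → x ∈ m x e → y ∈ m e' y → m x y ≠ ∅ → e = e' := by
  intro e e' x y he he' hx hy hne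
  obtain ⟨z, hz⟩ := Set.nonempty_iff_ne_empty.2 hne
  -- z ∈ ⋃ u ∈ m x e, m u y since x ∈ m x e
  have h1 : z ∈ ⋃ v ∈ m e y, m x v := by
    rw [hassoc]; exact Set.mem_biUnion hx hz
  obtain ⟨w, hw, -⟩ := Set.mem_iUnion₂.1 h1
  -- w ∈ m e y, y ∈ m e' y ⟹ w ∈ ⋃ v ∈ m e' y, m e v = ⋃ u ∈ m e e', m u y
  have h2 : w ∈ ⋃ u ∈ m e e', m u y := by
    rw [← hassoc]; exact Set.mem_biUnion hy hw
  obtain ⟨u, hu, -⟩ := Set.mem_iUnion₂.1 h2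
  have hue : u = e := by
    have := hE2 e
    have : u ∈ ({e} : Set X) := by rw [← this]; exact Set.mem_biUnion he' hu
    simpa using this
  have hue' : u = e' := by
    have := hE1 e'
    have : u ∈ ({e'} : Set X) := by rw [← this]; exact Set.mem_biUnion he hu
    simpa using this
  rw [← hue, hue']
end

section
/- Let X be an ℓr-multisemigroup and E = {x | ℓ x = x}. Then the lifted operation on Set X given by A ⊙ B = ⋃ {x ⊙ y | x ∈ A, y ∈ B} is associative, has E as a two-sided unit (E ⊙ A = A = A ⊙ E), and preserves arbitrary unions in both arguments: (⋃ 𝒜) ⊙ B = ⋃ {A ⊙ B | A ∈ 𝒜} and A ⊙ (⋃ ℬ) = ⋃ {A ⊙ B | B ∈ ℬ}. Hence (Set X, ⊆, ⊙, E) is a unital quantale. -/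
open Set

/-- For an ℓr-multisemigroup `X`, the lifted operation on `Set X` is associative, has
`E = {x | l x = x}` as a two-sided unit, and preserves arbitrary unions in both
arguments; hence `(Set X, ⊆, ⊙, E)` is a unital quantale. -/
theorem stmt8 {X : Type*} (m : X → X → Set X) (l r : X → X)
    (hassoc : ∀ x y z : X, (⋃ v ∈ m y z, m x v) = ⋃ u ∈ m x y, m u z)
    (hD : ∀ x y, m x y ≠ ∅ → r x = l y)
    (hl : ∀ x, m (l x) x = {x})
    (hr : ∀ x, m x (r x) = {x}) :
    (∀ A B C : Set X, mprod m (mprod m A B) C = mprod m A (mprod m B C)) ∧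
    (∀ A : Set X, mprod m {x | l x = x} A = A) ∧
    (∀ A : Set X, mprod m A {x | l x = x} = A) ∧
    (∀ (𝒜 : Set (Set X)) (B : Set X), mprod m (⋃₀ 𝒜) B = ⋃ A ∈ 𝒜, mprod m A B) ∧
    (∀ (A : Set X) (ℬ : Set (Set X)), mprod m A (⋃₀ ℬ) = ⋃ B ∈ ℬ, mprod m A B) := by
  have hE : ∀ e : X, l e = e → r e = e := by
    intro e he
    have h1 : m e e = {e} := by have := hl e; rwa [he] at this
    have h2 : r e = l e := hD e e (by rw [h1]; exact Set.singleton_ne_empty e)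
    rw [h2, he]
  refine ⟨?_, ?_, ?_, ?_, ?_⟩
  · intro A B C
    ext w
    simp only [mprod, mem_iUnion, exists_prop]
    constructor
    · rintro ⟨u, ⟨a, ha, b, hb, hu⟩, c, hc, hw⟩
      have : w ∈ ⋃ u ∈ m a b, m u c := mem_biUnion hu hw
      rw [← hassoc a b c] at this
      rcases mem_iUnion₂.mp this with ⟨v, hv, hwv⟩
      exact ⟨a, ha, v, ⟨b, hb, c, hc, hv⟩, hwv⟩
    · rintro ⟨a, ha, v, ⟨b, hb, c, hc, hv⟩, hw⟩
      have : w ∈ ⋃ v ∈ m b c, m a v := mem_biUnion hv hw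
      rw [hassoc a b c] at this
      rcases mem_iUnion₂.mp this with ⟨u, hu, hwu⟩
      exact ⟨u, ⟨a, ha, b, hb, hu⟩, c, hc, hwu⟩
  · intro A
    ext w
    simp only [mprod, mem_iUnion, exists_prop, mem_setOf_eq]
    constructor
    · rintro ⟨e, he, y, hy, hw⟩
      have hne : m e y ≠ ∅ := fun h => by rw [h] at hw; exact hw
      have : r e = l y := hD e y hne
      have h2 : e = l y := by rw [← this, hE e he]
      have : m e y = {y} := by rw [h2]; exact hl y
      rw [this] at hw
      rwa [mem_singleton_iff.mp hw]
    · intro hw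
      refine ⟨l w, ?_, w, hw, ?_⟩
      · -- l (l w) = l w
        have h1 : r (l w) = l w := hD (l w) w (by rw [hl w]; exact Set.singleton_ne_empty w)
        have h2 : m (l w) (l w) = {l w} := by have := hr (l w); rwa [h1] at this
        have h3 : r (l w) = l (l w) := hD (l w) (l w) (by rw [h2]; exact Set.singleton_ne_empty _)
        rw [← h3, h1]
      · rw [hl w]; exact rfl
  · intro A
    ext w
    simp only [mprod, mem_iUnion, exists_prop, mem_setOf_eq]
    constructor
    · rintro ⟨y, hy, e, he, hw⟩
      have hne : m y e ≠ ∅ := fun h => by rw [h] at hw; exact hw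
      have h2 : r y = e := by rw [hD y e hne, he]
      have : m y e = {y} := by rw [← h2]; exact hr y
      rw [this] at hw
      rwa [mem_singleton_iff.mp hw]
    · intro hw
      refine ⟨w, hw, r w, ?_, ?_⟩
      · exact (hD w (r w) (by rw [hr w]; exact Set.singleton_ne_empty w)).symm
      · rw [hr w]; exact rfl
  · intro 𝒜 B
    ext w
    simp only [mprod, mem_iUnion, exists_prop, mem_sUnion]
    constructor
    · rintro ⟨x, ⟨A, hA, hx⟩, y, hy, hw⟩
      exact ⟨A, hA, x, hx, y, hy, hw⟩
    · rintro ⟨A, hA, x, hx, y, hy, hw⟩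
      exact ⟨x, ⟨A, hA, hx⟩, y, hy, hw⟩
  · intro A ℬ
    ext w
    simp only [mprod, mem_iUnion, exists_prop, mem_sUnion]
    constructor
    · rintro ⟨x, hx, y, ⟨B, hB, hy⟩, hw⟩
      exact ⟨B, hB, x, hx, y, hy, hw⟩
    · rintro ⟨B, hB, x, hx, y, hy, hw⟩
      exact ⟨x, hx, y, ⟨B, hB, hy⟩, hw⟩
end

section
/- Let X be an ℓr-multisemigroup and Q a unital quantale. Then convolution on functions X → Q is associative ((f ∗ g) ∗ h = f ∗ (g ∗ h)), id_E is a two-sided unit (id_E ∗ f = f = f ∗ id_E), and convolution preserves arbitrary pointwise suprema in both arguments: (⨆ F) ∗ g = ⨆ {f ∗ g | f ∈ F} and f ∗ (⨆ G) = ⨆ {f ∗ g | g ∈ G}. Hence X → Q with the pointwise order, convolution and id_E is a unital quantale. -/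
open Set

private lemma isup_mul' {Q : Type*} [CompleteLattice Q] [Monoid Q] [IsQuantale Q]
    {ι : Sort*} (f : ι → Q) (x : Q) : (⨆ i, f i) * x = ⨆ i, f i * x := by
  rw [iSup, sSup_mul_distrib, iSup_range]

private lemma mul_isup' {Q : Type*} [CompleteLattice Q] [Monoid Q] [IsQuantale Q]
    {ι : Sort*} (f : ι → Q) (x : Q) : x * (⨆ i, f i) = ⨆ i, x * f i := by
  rw [iSup, mul_sSup_distrib, iSup_range]

/-- Convolution of functions `f, g : X → Q` along a multioperation:
`(f ∗ g)(x) = ⨆ {f y * g z | x ∈ y ⊙ z}`. -/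
def conv {X Q : Type*} [CompleteLattice Q] [Mul Q] (m : X → X → Set X)
    (f g : X → Q) : X → Q :=
  fun x => ⨆ y, ⨆ z, ⨆ _ : x ∈ m y z, f y * g z

/-- `id_E x = 1` if `ℓ x = x` and `⊥` otherwise. -/
noncomputable def idE {X Q : Type*} [CompleteLattice Q] [One Q] (l : X → X) : X → Q :=
  fun x => letI := Classical.dec (l x = x); if l x = x then 1 else ⊥

/-- For an ℓr-multisemigroup `X` and a unital quantale `Q`, convolution on `X → Q` is
associative, has `id_E` as two-sided unit and preserves arbitrary pointwise suprema in
both arguments; hence `X → Q` with the pointwise order, convolution and `id_E` is a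
unital quantale. -/
theorem stmt9 {X Q : Type*} [CompleteLattice Q] [Monoid Q] [IsQuantale Q]
    (m : X → X → Set X) (l r : X → X)
    (hassoc : ∀ x y z : X, (⋃ v ∈ m y z, m x v) = ⋃ u ∈ m x y, m u z)
    (hD : ∀ x y, m x y ≠ ∅ → r x = l y)
    (hl : ∀ x, m (l x) x = {x})
    (hr : ∀ x, m x (r x) = {x}) :
    (∀ f g h : X → Q, conv m (conv m f g) h = conv m f (conv m g h)) ∧
    (∀ f : X → Q, conv m (idE l) f = f) ∧
    (∀ f : X → Q, conv m f (idE l) = f) ∧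
    (∀ (F : Set (X → Q)) (g : X → Q), conv m (sSup F) g = ⨆ f ∈ F, conv m f g) ∧
    (∀ (f : X → Q) (G : Set (X → Q)), conv m f (sSup G) = ⨆ g ∈ G, conv m f g) := by
  have botmul : ∀ a : Q, (⊥ : Q) * a = ⊥ := fun a => by
    rw [← sSup_empty, sSup_mul_distrib]; simp
  have mulbot : ∀ a : Q, a * (⊥ : Q) = ⊥ := fun a => by
    rw [← sSup_empty, mul_sSup_distrib]; simp
  have hlid : ∀ x : X, l (l x) = l x := by
    intro x
    have h1 : r (l x) = l x := hD _ _ (by rw [hl]; exact Set.singleton_ne_empty x)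
    have h2 : m (l x) (l x) = {l x} := by have := hr (l x); rwa [h1] at this
    have h3 : r (l x) = l (l x) := hD _ _ (by rw [h2]; exact Set.singleton_ne_empty _)
    rw [← h3, h1]
  have hrl : ∀ x : X, l (r x) = r x :=
    fun x => (hD x (r x) (by rw [hr]; exact Set.singleton_ne_empty x)).symm
  refine ⟨?_, ?_, ?_, ?_, ?_⟩
  · intro f g h
    funext x
    simp only [conv]
    apply le_antisymm
    · refine iSup_le fun u => iSup_le fun z => iSup_le fun hx => ?_
      rw [isup_mul' _ _]
      refine iSup_le fun y => ?_
      rw [isup_mul' _ _]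
      refine iSup_le fun w => ?_
      rw [isup_mul' _ _]
      refine iSup_le fun hu => ?_
      have hx' : x ∈ ⋃ v ∈ m w z, m y v := by
        rw [hassoc y w z]; exact Set.mem_biUnion hu hx
      obtain ⟨v, hv, hxv⟩ := Set.mem_iUnion₂.mp hx'
      have h5 : g w * h z ≤ ⨆ w', ⨆ z', ⨆ _ : v ∈ m w' z', g w' * h z' :=
        le_iSup_of_le w (le_iSup_of_le z (le_iSup_of_le hv le_rfl))
      refine le_trans (le_of_eq (mul_assoc _ _ _))
        (le_trans (mul_le_mul_right h5 _) ?_)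
      exact le_iSup_of_le y (le_iSup_of_le v (le_iSup_of_le hxv le_rfl))
    · refine iSup_le fun y => iSup_le fun v => iSup_le fun hx => ?_
      rw [mul_isup' _ _]
      refine iSup_le fun w => ?_
      rw [mul_isup' _ _]
      refine iSup_le fun z => ?_
      rw [mul_isup' _ _]
      refine iSup_le fun hv => ?_
      have hx' : x ∈ ⋃ u ∈ m y w, m u z := by
        rw [← hassoc y w z]; exact Set.mem_biUnion hv hx
      obtain ⟨u, hu, hxu⟩ := Set.mem_iUnion₂.mp hx'
      have h5 : f y * g w ≤ ⨆ y', ⨆ w', ⨆ _ : u ∈ m y' w', f y' * g w' :=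
        le_iSup_of_le y (le_iSup_of_le w (le_iSup_of_le hu le_rfl))
      refine le_trans (le_of_eq (mul_assoc _ _ _).symm)
        (le_trans (mul_le_mul_left h5 _) ?_)
      exact le_iSup_of_le u (le_iSup_of_le z (le_iSup_of_le hxu le_rfl))
  · intro f
    funext x
    simp only [conv, idE]
    apply le_antisymm
    · refine iSup_le fun y => iSup_le fun z => iSup_le fun hx => ?_
      by_cases hy : l y = y
      · have hne : m y z ≠ ∅ := fun h => by rw [h] at hx; exact hx
        have h1 : r y = l z := hD _ _ hne
        have h2 : r y = l y := by
          refine hD y y ?_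
          have := hl y; rw [hy] at this; rw [this]; exact Set.singleton_ne_empty y
        have h3 : l z = y := by rw [← h1, h2, hy]
        have h4 : x = z := by
          have := hl z; rw [h3] at this; rw [this] at hx; exact hx
        subst h4
        simp [hy]
      · simp only [if_neg hy, botmul]
        exact bot_le
    · have hx : x ∈ m (l x) x := by rw [hl]; rfl
      refine le_trans ?_ (le_iSup_of_le (l x) (le_iSup_of_le x (le_iSup_of_le hx le_rfl)))
      simp [hlid x]
  · intro f
    funext x
    simp only [conv, idE]
    apply le_antisymm
    · refine iSup_le fun y => iSup_le fun z => iSup_le fun hx => ?_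
      by_cases hz : l z = z
      · have hne : m y z ≠ ∅ := fun h => by rw [h] at hx; exact hx
        have h1 : r y = z := by rw [hD _ _ hne, hz]
        have h4 : x = y := by
          have := hr y; rw [h1] at this; rw [this] at hx; exact hx
        subst h4
        simp [hz]
      · simp only [if_neg hz, mulbot]
        exact bot_le
    · have hx : x ∈ m x (r x) := by rw [hr]; rfl
      refine le_trans ?_ (le_iSup_of_le x (le_iSup_of_le (r x) (le_iSup_of_le hx le_rfl)))
      simp [hrl x]
  · intro F g
    funext x
    simp only [conv, sSup_apply, iSup_apply]
    apply le_antisymm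
    · refine iSup_le fun y => iSup_le fun z => iSup_le fun hx => ?_
      rw [isup_mul' _ _]
      refine iSup_le fun f => ?_
      exact le_iSup_of_le f.1 (le_iSup_of_le f.2
        (le_iSup_of_le y (le_iSup_of_le z (le_iSup_of_le hx le_rfl))))
    · refine iSup_le fun f => iSup_le fun hf => iSup_le fun y => iSup_le fun z =>
        iSup_le fun hx => ?_
      have h5 : f y ≤ ⨆ f' : ↥F, (f' : X → Q) y := le_iSup_of_le (⟨f, hf⟩ : ↥F) le_rfl
      exact le_trans (mul_le_mul_left h5 _)
        (le_iSup_of_le y (le_iSup_of_le z (le_iSup_of_le hx le_rfl)))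
  · intro f G
    funext x
    simp only [conv, sSup_apply, iSup_apply]
    apply le_antisymm
    · refine iSup_le fun y => iSup_le fun z => iSup_le fun hx => ?_
      rw [mul_isup' _ _]
      refine iSup_le fun g => ?_
      exact le_iSup_of_le g.1 (le_iSup_of_le g.2
        (le_iSup_of_le y (le_iSup_of_le z (le_iSup_of_le hx le_rfl))))
    · refine iSup_le fun g => iSup_le fun hg => iSup_le fun y => iSup_le fun z =>
        iSup_le fun hx => ?_
      have h5 : g z ≤ ⨆ g' : ↥G, (g' : X → Q) z := le_iSup_of_le (⟨g, hg⟩ : ↥G) le_rfl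
      exact le_trans (mul_le_mul_right h5 _)
        (le_iSup_of_le y (le_iSup_of_le z (le_iSup_of_le hx le_rfl)))
end

section
/- Let X be an ℓr-multimagma, A, B ⊆ X, 𝒜 a family of subsets of X, and E = {x | ℓ x = x}. Then: (compatibility) ℓ(r(A)) = r(A) and r(ℓ(A)) = ℓ(A); (absorption) ℓ(A) ⊙ A = A and A ⊙ r(A) = A; (sup preservation) ℓ(⋃ 𝒜) = ⋃ {ℓ(A) | A ∈ 𝒜} and r(⋃ 𝒜) = ⋃ {r(A) | A ∈ 𝒜}; (commutativity) f(A) ⊙ g(B) = g(B) ⊙ f(A) for all choices of f, g among the image maps of ℓ and r; (subidentity) ℓ(A) ⊆ E and r(A) ⊆ E; (export) ℓ(ℓ(A) ⊙ B) = ℓ(A) ⊙ ℓ(B) and r(A ⊙ r(B)) = r(A) ⊙ r(B). -/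
open Set

lemma mem_mprod {X : Type*} (m : X → X → Set X) (A B : Set X) (z : X) :
    z ∈ mprod m A B ↔ ∃ a ∈ A, ∃ b ∈ B, z ∈ m a b := by
  simp [mprod]

/-- Powerset lifting for ℓr-multimagmas: compatibility, absorption, sup preservation,
commutativity, subidentity and export laws. -/
theorem stmt10 {X : Type*} (m : X → X → Set X) (l r : X → X)
    (hD : ∀ x y, m x y ≠ ∅ → r x = l y)
    (hl : ∀ x, m (l x) x = {x})
    (hr : ∀ x, m x (r x) = {x}) :
    (∀ A : Set X, l '' (r '' A) = r '' A) ∧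
    (∀ A : Set X, r '' (l '' A) = l '' A) ∧
    (∀ A : Set X, mprod m (l '' A) A = A) ∧
    (∀ A : Set X, mprod m A (r '' A) = A) ∧
    (∀ 𝒜 : Set (Set X), l '' (⋃₀ 𝒜) = ⋃ A ∈ 𝒜, l '' A) ∧
    (∀ 𝒜 : Set (Set X), r '' (⋃₀ 𝒜) = ⋃ A ∈ 𝒜, r '' A) ∧
    (∀ (f g : X → X), (f = l ∨ f = r) → (g = l ∨ g = r) →
      ∀ A B : Set X, mprod m (f '' A) (g '' B) = mprod m (g '' B) (f '' A)) ∧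
    (∀ A : Set X, l '' A ⊆ {x | l x = x}) ∧
    (∀ A : Set X, r '' A ⊆ {x | l x = x}) ∧
    (∀ A B : Set X, l '' (mprod m (l '' A) B) = mprod m (l '' A) (l '' B)) ∧
    (∀ A B : Set X, r '' (mprod m A (r '' B)) = mprod m (r '' A) (r '' B)) := by
  have hrl : ∀ x, r (l x) = l x := fun x => hD _ _ (by rw [hl]; simp)
  have hlr : ∀ x, l (r x) = r x := fun x => (hD _ _ (by rw [hr]; simp)).symm
  have hll : ∀ x, l (l x) = l x := fun x => by have := hlr (l x); rwa [hrl] at this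
  have hrr : ∀ x, r (r x) = r x := fun x => by have := hrl (r x); rwa [hlr] at this
  -- on idempotents the product is trivial
  have key : ∀ a b z : X, l a = a → l b = b → r a = a → z ∈ m a b → a = b ∧ z = a := by
    intro a b z ha hb hra hz
    have hne : m a b ≠ ∅ := fun h => by simp [h] at hz
    have hab : a = b := by have := hD a b hne; rw [hra, hb] at this; exact this
    subst hab
    have : m (l a) a = {a} := hl a
    rw [ha] at this
    rw [this] at hz
    exact ⟨rfl, hz⟩
  have mem_self : ∀ a : X, l a = a → a ∈ m a a := by
    intro a ha
    have : m (l a) a = {a} := hl a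
    rw [ha] at this
    rw [this]; rfl
  have hid : ∀ f : X → X, (f = l ∨ f = r) → ∀ x, l (f x) = f x ∧ r (f x) = f x := by
    rintro f (rfl | rfl) x
    · exact ⟨hll x, hrl x⟩
    · exact ⟨hlr x, hrr x⟩
  refine ⟨?_, ?_, ?_, ?_, ?_, ?_, ?_, ?_, ?_, ?_, ?_⟩
  · intro A; ext z; simp only [mem_image]
    constructor
    · rintro ⟨y, ⟨x, hx, rfl⟩, rfl⟩; exact ⟨x, hx, (hlr x).symm⟩
    · rintro ⟨x, hx, rfl⟩; exact ⟨r x, ⟨x, hx, rfl⟩, hlr x⟩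
  · intro A; ext z; simp only [mem_image]
    constructor
    · rintro ⟨y, ⟨x, hx, rfl⟩, rfl⟩; exact ⟨x, hx, (hrl x).symm⟩
    · rintro ⟨x, hx, rfl⟩; exact ⟨l x, ⟨x, hx, rfl⟩, hrl x⟩
  · intro A; ext z; rw [mem_mprod]
    constructor
    · rintro ⟨a, ⟨x, hx, rfl⟩, b, hb, hz⟩
      have hne : m (l x) b ≠ ∅ := fun h => by simp [h] at hz
      have : l x = l b := by have := hD _ _ hne; rwa [hrl] at this
      rw [this, hl b] at hz
      rwa [hz]
    · intro hz
      exact ⟨l z, ⟨z, hz, rfl⟩, z, hz, by rw [hl z]; rfl⟩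
  · intro A; ext z; rw [mem_mprod]
    constructor
    · rintro ⟨a, ha, b, ⟨x, hx, rfl⟩, hz⟩
      have hne : m a (r x) ≠ ∅ := fun h => by simp [h] at hz
      have : r a = r x := by have := hD _ _ hne; rwa [hlr] at this
      rw [← this, hr a] at hz
      rwa [hz]
    · intro hz
      exact ⟨z, hz, r z, ⟨z, hz, rfl⟩, by rw [hr z]; rfl⟩
  · intro 𝒜; ext z; simp [mem_image]; tauto
  · intro 𝒜; ext z; simp [mem_image]; tauto
  · intro f g hf hg A B; ext z
    rw [mem_mprod, mem_mprod]
    constructor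
    · rintro ⟨a, ⟨x, hx, rfl⟩, b, ⟨y, hy, rfl⟩, hz⟩
      obtain ⟨h1, h2⟩ := hid f hf x
      obtain ⟨h3, h4⟩ := hid g hg y
      obtain ⟨heq, rfl⟩ := key _ _ _ h1 h3 h2 hz
      exact ⟨g y, ⟨y, hy, rfl⟩, f x, ⟨x, hx, rfl⟩, by rw [heq]; exact mem_self _ h3⟩
    · rintro ⟨a, ⟨y, hy, rfl⟩, b, ⟨x, hx, rfl⟩, hz⟩
      obtain ⟨h1, h2⟩ := hid g hg y
      obtain ⟨h3, h4⟩ := hid f hf x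
      obtain ⟨heq, rfl⟩ := key _ _ _ h1 h3 h2 hz
      exact ⟨f x, ⟨x, hx, rfl⟩, g y, ⟨y, hy, rfl⟩, by rw [heq]; exact mem_self _ h3⟩
  · rintro A z ⟨x, hx, rfl⟩; exact hll x
  · rintro A z ⟨x, hx, rfl⟩; exact hlr x
  · intro A B; ext z
    simp only [mem_image, mem_mprod]
    constructor
    · rintro ⟨w, ⟨a, ⟨x, hx, rfl⟩, b, hb, hw⟩, rfl⟩
      have hne : m (l x) b ≠ ∅ := fun h => by simp [h] at hw
      have hxb : l x = l b := by have := hD _ _ hne; rwa [hrl] at this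
      rw [hxb, hl b] at hw
      subst hw
      refine ⟨l x, ⟨x, hx, rfl⟩, l w, ⟨w, hb, rfl⟩, ?_⟩
      rw [hxb]; exact mem_self _ (hll w)
    · rintro ⟨a, ⟨x, hx, rfl⟩, b, ⟨y, hy, rfl⟩, hz⟩
      obtain ⟨hxy, rfl⟩ := key _ _ _ (hll x) (hll y) (hrl x) hz
      refine ⟨y, ⟨l x, ⟨x, hx, rfl⟩, y, hy, ?_⟩, hxy.symm ▸ rfl⟩
      rw [hxy, hl y]; rfl
  · intro A B; ext z
    simp only [mem_image, mem_mprod]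
    constructor
    · rintro ⟨w, ⟨a, ha, b, ⟨y, hy, rfl⟩, hw⟩, rfl⟩
      have hne : m a (r y) ≠ ∅ := fun h => by simp [h] at hw
      have hay : r a = r y := by have := hD _ _ hne; rwa [hlr] at this
      rw [← hay, hr a] at hw
      subst hw
      refine ⟨r w, ⟨w, ha, rfl⟩, r y, ⟨y, hy, rfl⟩, ?_⟩
      rw [← hay]; exact mem_self _ (hlr w)
    · rintro ⟨a, ⟨x, hx, rfl⟩, b, ⟨y, hy, rfl⟩, hz⟩
      obtain ⟨hxy, rfl⟩ := key _ _ _ (hlr x) (hlr y) (hrr x) hz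
      refine ⟨x, ⟨x, hx, r y, ⟨y, hy, rfl⟩, ?_⟩, rfl⟩
      rw [← hxy, hr x]; rfl
end

section
/- Let X be an ℓr-multisemigroup and A, B ⊆ X. Then ℓ(A ⊙ B) ⊆ ℓ(A ⊙ ℓ(B)) and r(A ⊙ B) ⊆ r(r(A) ⊙ B). If X is moreover local, both inclusions are equalities. -/
open Set

lemma key_l {X : Type*} (m : X → X → Set X) (l r : X → X)
    (hassoc : ∀ x y z : X, (⋃ v ∈ m y z, m x v) = ⋃ u ∈ m x y, m u z)
    (hD : ∀ x y, m x y ≠ ∅ → r x = l y)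
    (hl : ∀ x, m (l x) x = {x})
    {x y u : X} (hu : u ∈ m x y) : l u = l x := by
  have h1 : (⋃ v ∈ m x y, m (l x) v) = m x y := by
    rw [hassoc (l x) x y, hl x]; simp
  have hu' : u ∈ ⋃ v ∈ m x y, m (l x) v := by rw [h1]; exact hu
  simp only [mem_iUnion] at hu'
  obtain ⟨v, hv, huv⟩ := hu'
  have hne : m (l x) v ≠ ∅ := fun h => by rw [h] at huv; exact huv
  have h2 : r (l x) = l v := hD _ _ hne
  have h3 : r (l x) = l x := hD _ _ (by rw [hl x]; simp)
  have hlv : l v = l x := by rw [← h2, h3]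
  rw [← hlv, hl v] at huv
  rw [huv, hlv]

lemma key_r {X : Type*} (m : X → X → Set X) (l r : X → X)
    (hassoc : ∀ x y z : X, (⋃ v ∈ m y z, m x v) = ⋃ u ∈ m x y, m u z)
    (hD : ∀ x y, m x y ≠ ∅ → r x = l y)
    (hr : ∀ x, m x (r x) = {x})
    {x y u : X} (hu : u ∈ m x y) : r u = r y := by
  have h1 : (⋃ u' ∈ m x y, m u' (r y)) = m x y := by
    rw [← hassoc x y (r y), hr y]; simp
  have hu' : u ∈ ⋃ u' ∈ m x y, m u' (r y) := by rw [h1]; exact hu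
  simp only [mem_iUnion] at hu'
  obtain ⟨v, hv, huv⟩ := hu'
  have hne : m v (r y) ≠ ∅ := fun h => by rw [h] at huv; exact huv
  have h2 : r v = l (r y) := hD _ _ hne
  have h3 : r y = l (r y) := hD _ _ (by rw [hr y]; simp)
  have hrv : r v = r y := by rw [h2, ← h3]
  rw [← hrv, hr v] at huv
  rw [huv, hrv]

/-- For an ℓr-multisemigroup, `ℓ(A ⊙ B) ⊆ ℓ(A ⊙ ℓ(B))` and `r(A ⊙ B) ⊆ r(r(A) ⊙ B)`;
if moreover the structure is local, both inclusions are equalities. -/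
theorem stmt11 {X : Type*} (m : X → X → Set X) (l r : X → X)
    (hassoc : ∀ x y z : X, (⋃ v ∈ m y z, m x v) = ⋃ u ∈ m x y, m u z)
    (hD : ∀ x y, m x y ≠ ∅ → r x = l y)
    (hl : ∀ x, m (l x) x = {x})
    (hr : ∀ x, m x (r x) = {x}) :
    (∀ A B : Set X, l '' (mprod m A B) ⊆ l '' (mprod m A (l '' B))) ∧
    (∀ A B : Set X, r '' (mprod m A B) ⊆ r '' (mprod m (r '' A) B)) ∧
    ((∀ x y, r x = l y → m x y ≠ ∅) →
      (∀ A B : Set X, l '' (mprod m A B) = l '' (mprod m A (l '' B))) ∧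
      (∀ A B : Set X, r '' (mprod m A B) = r '' (mprod m (r '' A) B))) := by
  have mem_mprod : ∀ (A B : Set X) (z : X),
      z ∈ mprod m A B ↔ ∃ x ∈ A, ∃ y ∈ B, z ∈ m x y := by
    intro A B z; simp [mprod]
  have sub1 : ∀ A B : Set X, l '' (mprod m A B) ⊆ l '' (mprod m A (l '' B)) := by
    intro A B z hz
    obtain ⟨u, hu, rfl⟩ := hz
    obtain ⟨x, hx, y, hy, hu⟩ := (mem_mprod A B u).mp hu
    have hne : m x y ≠ ∅ := fun h => by rw [h] at hu; exact hu
    have hrx : r x = l y := hD _ _ hne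
    refine ⟨x, (mem_mprod _ _ _).mpr ⟨x, hx, l y, ⟨y, hy, rfl⟩, ?_⟩, ?_⟩
    · rw [← hrx, hr x]; rfl
    · exact (key_l m l r hassoc hD hl hu).symm
  have sub2 : ∀ A B : Set X, r '' (mprod m A B) ⊆ r '' (mprod m (r '' A) B) := by
    intro A B z hz
    obtain ⟨u, hu, rfl⟩ := hz
    obtain ⟨x, hx, y, hy, hu⟩ := (mem_mprod A B u).mp hu
    have hne : m x y ≠ ∅ := fun h => by rw [h] at hu; exact hu
    have hrx : r x = l y := hD _ _ hne
    refine ⟨y, (mem_mprod _ _ _).mpr ⟨r x, ⟨x, hx, rfl⟩, y, hy, ?_⟩, ?_⟩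
    · rw [hrx, hl y]; rfl
    · exact (key_r m l r hassoc hD hr hu).symm
  refine ⟨sub1, sub2, fun hloc => ⟨?_, ?_⟩⟩
  · intro A B
    refine subset_antisymm (sub1 A B) ?_
    rintro z ⟨w, hw, rfl⟩
    obtain ⟨x, hx, ly, ⟨y, hy, rfl⟩, hw⟩ := (mem_mprod _ _ _).mp hw
    have hne : m x (l y) ≠ ∅ := fun h => by rw [h] at hw; exact hw
    have h1 : r x = l (l y) := hD _ _ hne
    have h2 : l (l y) = l y := (key_l m l r hassoc hD hl (show y ∈ m (l y) y by rw [hl y]; rfl)).symm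
    have hxy : m x y ≠ ∅ := hloc x y (h1.trans h2)
    obtain ⟨u, hu⟩ := Set.nonempty_iff_ne_empty.mpr hxy
    refine ⟨u, (mem_mprod _ _ _).mpr ⟨x, hx, y, hy, hu⟩, ?_⟩
    rw [key_l m l r hassoc hD hl hu, key_l m l r hassoc hD hl hw]
  · intro A B
    refine subset_antisymm (sub2 A B) ?_
    rintro z ⟨w, hw, rfl⟩
    obtain ⟨rx, ⟨x, hx, rfl⟩, y, hy, hw⟩ := (mem_mprod _ _ _).mp hw
    have hne : m (r x) y ≠ ∅ := fun h => by rw [h] at hw; exact hw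
    have h1 : r (r x) = l y := hD _ _ hne
    have h2 : r (r x) = r x := (key_r m l r hassoc hD hr (show x ∈ m x (r x) by rw [hr x]; rfl)).symm
    have hxy : m x y ≠ ∅ := hloc x y (h2.symm.trans h1)
    obtain ⟨u, hu⟩ := Set.nonempty_iff_ne_empty.mpr hxy
    refine ⟨u, (mem_mprod _ _ _).mpr ⟨x, hx, y, hy, hu⟩, ?_⟩
    rw [key_r m l r hassoc hD hr hu, key_r m l r hassoc hD hr hw]
end

section
/- Let X be an ℓr-multimagma, Q a unital quantale, and dom, cod : Q → Q maps satisfying: α ≤ dom α * α, dom α ≤ 1, dom (⨆ S) = ⨆ {dom α | α ∈ S} for every S ⊆ Q, dom (dom α * β) = dom α * dom β, and dom ∘ cod = cod. Then on functions X → Q with convolution ∗: Dom (⨆ F) = ⨆ {Dom f | f ∈ F} for every family F; Dom f ≤ id_E; (Dom f) ∗ f = f; Dom ((Dom f) ∗ g) = (Dom f) ∗ (Dom g); and Dom (Cod f) = Cod f. -/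
open Set

/-- `(Dom f) v = ⨆ {dom (f x) | ℓ x = v}`. -/
def DomOp {X Q : Type*} [CompleteLattice Q] (l : X → X) (dm : Q → Q)
    (f : X → Q) : X → Q :=
  fun v => ⨆ x, ⨆ _ : l x = v, dm (f x)

/-- `(Cod f) v = ⨆ {cod (f x) | r x = v}`. -/
def CodOp {X Q : Type*} [CompleteLattice Q] (r : X → X) (cd : Q → Q)
    (f : X → Q) : X → Q :=
  fun v => ⨆ x, ⨆ _ : r x = v, cd (f x)


private lemma aux_iSup_mul {Q : Type*} [CompleteLattice Q] [Semigroup Q] [IsQuantale Q]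
    {ι : Sort*} (h : ι → Q) (a : Q) : (⨆ i, h i) * a = ⨆ i, h i * a := by
  rw [iSup, sSup_mul_distrib, iSup_range]

private lemma aux_mul_iSup {Q : Type*} [CompleteLattice Q] [Semigroup Q] [IsQuantale Q]
    {ι : Sort*} (a : Q) (h : ι → Q) : a * (⨆ i, h i) = ⨆ i, a * h i := by
  rw [iSup, mul_sSup_distrib, iSup_range]

private lemma aux_dm_iSup {Q : Type*} [CompleteLattice Q] (dm : Q → Q)
    (hsup : ∀ S : Set Q, dm (sSup S) = ⨆ α ∈ S, dm α)
    {ι : Sort*} (h : ι → Q) : dm (⨆ i, h i) = ⨆ i, dm (h i) := by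
  rw [iSup, hsup, iSup_range]

private lemma aux_dm_mono {Q : Type*} [CompleteLattice Q] (dm : Q → Q)
    (hsup : ∀ S : Set Q, dm (sSup S) = ⨆ α ∈ S, dm α)
    {a b : Q} (hab : a ≤ b) : dm a ≤ dm b := by
  have h := hsup {a, b}
  rw [sSup_pair, sup_eq_right.mpr hab] at h
  rw [h]
  exact le_iSup_of_le a (le_iSup_of_le (by simp) le_rfl)

/-- Lifting the prequantale domain axioms from an ℓr-multimagma `X` and a quantale `Q`
to the convolution algebra `X → Q`. -/
theorem stmt12 {X Q : Type*} [CompleteLattice Q] [Monoid Q] [IsQuantale Q]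
    (m : X → X → Set X) (l r : X → X)
    (hD : ∀ x y, m x y ≠ ∅ → r x = l y)
    (hl : ∀ x, m (l x) x = {x})
    (hr : ∀ x, m x (r x) = {x})
    (dm cd : Q → Q)
    (habs : ∀ α, α ≤ dm α * α)
    (hsub : ∀ α, dm α ≤ 1)
    (hsup : ∀ S : Set Q, dm (sSup S) = ⨆ α ∈ S, dm α)
    (hexp : ∀ α β, dm (dm α * β) = dm α * dm β)
    (hdc : ∀ α, dm (cd α) = cd α) :
    (∀ F : Set (X → Q), DomOp l dm (sSup F) = ⨆ f ∈ F, DomOp l dm f) ∧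
    (∀ f : X → Q, DomOp l dm f ≤ idE l) ∧
    (∀ f : X → Q, conv m (DomOp l dm f) f = f) ∧
    (∀ f g : X → Q,
      DomOp l dm (conv m (DomOp l dm f) g) = conv m (DomOp l dm f) (DomOp l dm g)) ∧
    (∀ f : X → Q, DomOp l dm (CodOp r cd f) = CodOp r cd f) := by

  -- basic structural facts
  have hrl : ∀ x, r (l x) = l x := fun x =>
    hD (l x) x (by rw [hl x]; exact (singleton_nonempty x).ne_empty)
  have hmll : ∀ x, m (l x) (l x) = {l x} := fun x => by
    have := hr (l x); rwa [hrl x] at this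
  have hlid : ∀ x, l (l x) = l x := fun x => by
    have := hD (l x) (l x) (by rw [hmll x]; exact (singleton_nonempty _).ne_empty)
    rw [hrl x] at this; exact this.symm
  have hlr : ∀ x, l (r x) = r x := fun x =>
    (hD x (r x) (by rw [hr x]; exact (singleton_nonempty x).ne_empty)).symm
  -- key cancellation: if x ∈ m (l w) z then x = z and l w = l z
  have hkey : ∀ w z x, x ∈ m (l w) z → x = z ∧ l w = l z := by
    intro w z x hx
    have hne : m (l w) z ≠ ∅ := Set.nonempty_iff_ne_empty.mp ⟨x, hx⟩
    have h1 : l w = l z := by have := hD (l w) z hne; rwa [hrl w] at this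
    rw [h1, hl z] at hx
    exact ⟨hx, h1⟩
  refine ⟨?_, ?_, ?_, ?_, ?_⟩
  · -- sup preservation
    intro F
    funext v
    simp only [DomOp, iSup_apply]
    have hF : ∀ x, sSup F x = ⨆ f : F, (f : X → Q) x := by
      intro x; simp [sSup_apply]
    apply le_antisymm
    · apply iSup_le; intro x; apply iSup_le; intro hx
      rw [hF, aux_dm_iSup dm hsup]
      apply iSup_le; rintro ⟨f, hf⟩
      exact le_iSup_of_le f (le_iSup_of_le hf (le_iSup_of_le x (le_iSup_of_le hx le_rfl)))
    · apply iSup_le; intro f; apply iSup_le; intro hf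
      apply iSup_le; intro x; apply iSup_le; intro hx
      refine le_iSup_of_le x (le_iSup_of_le hx ?_)
      apply aux_dm_mono dm hsup
      rw [hF]
      exact le_iSup_of_le ⟨f, hf⟩ le_rfl
  · -- Dom f ≤ idE
    intro f v
    apply iSup_le; intro x; apply iSup_le; intro hx
    have hv : l v = v := by rw [← hx, hlid]
    simp only [idE, hv, if_true]
    exact hsub _
  · -- Dom f ∗ f = f
    intro f
    funext x
    apply le_antisymm
    · simp only [conv, DomOp]
      apply iSup_le; intro y; apply iSup_le; intro z; apply iSup_le; intro hx
      rw [aux_iSup_mul]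
      apply iSup_le; intro w
      rw [aux_iSup_mul]
      apply iSup_le; intro hw
      subst hw
      obtain ⟨hxz, _⟩ := hkey w z x hx
      subst hxz
      calc dm (f w) * f x ≤ 1 * f x := mul_le_mul_left (hsub _) _
        _ = f x := one_mul _
    · have hx : x ∈ m (l x) x := by rw [hl x]; exact rfl
      simp only [conv, DomOp]
      calc f x ≤ dm (f x) * f x := habs _
        _ ≤ (⨆ w, ⨆ _ : l w = l x, dm (f w)) * f x :=
            mul_le_mul_left (by refine le_iSup_of_le x ?_; exact le_iSup_of_le rfl le_rfl) _
        _ ≤ ⨆ y, ⨆ z, ⨆ _ : x ∈ m y z, (⨆ w, ⨆ _ : l w = y, dm (f w)) * f z :=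
            le_iSup_of_le (l x) (le_iSup_of_le x (le_iSup_of_le hx le_rfl))
  · -- Dom (Dom f ∗ g) = Dom f ∗ Dom g
    intro f g
    funext v
    apply le_antisymm
    · simp only [DomOp, conv]
      apply iSup_le; intro x; apply iSup_le; intro hx
      rw [aux_dm_iSup dm hsup]; apply iSup_le; intro y
      rw [aux_dm_iSup dm hsup]; apply iSup_le; intro z
      rw [aux_dm_iSup dm hsup]; apply iSup_le; intro hxm
      rw [aux_iSup_mul, aux_dm_iSup dm hsup]; apply iSup_le; intro w
      rw [aux_iSup_mul, aux_dm_iSup dm hsup]; apply iSup_le; intro hw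
      rw [hexp]
      subst hw
      obtain ⟨hxz, hlw⟩ := hkey w z x hxm
      subst hxz
      have hmv : v ∈ m v v := by rw [← hx, hmll x]; exact rfl
      have h1 : dm (f w) ≤ ⨆ u, ⨆ _ : l u = v, dm (f u) :=
        le_iSup_of_le w (le_iSup_of_le (by rw [hlw, hx]) le_rfl)
      have h2 : dm (g x) ≤ ⨆ u, ⨆ _ : l u = v, dm (g u) :=
        le_iSup_of_le x (le_iSup_of_le hx le_rfl)
      exact le_iSup_of_le v (le_iSup_of_le v (le_iSup_of_le hmv (mul_le_mul' h1 h2)))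
    · simp only [conv, DomOp]
      apply iSup_le; intro y; apply iSup_le; intro z; apply iSup_le; intro hv
      rw [aux_iSup_mul]; apply iSup_le; intro w
      rw [aux_iSup_mul]; apply iSup_le; intro hw
      rw [aux_mul_iSup]; apply iSup_le; intro u
      rw [aux_mul_iSup]; apply iSup_le; intro hu
      subst hw hu
      obtain ⟨hvz, hlw⟩ := hkey w (l u) v hv
      rw [hlid] at hlw
      have hu2 : u ∈ m (l w) u := by rw [hlw, hl u]; exact rfl
      have hxv : l u = v := hvz.symm
      have step : dm (f w) * dm (g u) ≤ dm (conv m (DomOp l dm f) g u) := by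
        rw [← hexp]
        apply aux_dm_mono dm hsup
        simp only [conv, DomOp]
        refine le_iSup_of_le (l w) (le_iSup_of_le u (le_iSup_of_le hu2 ?_))
        exact mul_le_mul_left (by refine le_iSup_of_le w ?_; exact le_iSup_of_le rfl le_rfl) _
      exact step.trans (le_iSup_of_le u (le_iSup_of_le hxv le_rfl))
  · -- Dom (Cod f) = Cod f
    intro f
    funext v
    apply le_antisymm
    · simp only [DomOp, CodOp]
      apply iSup_le; intro x; apply iSup_le; intro hx
      rw [aux_dm_iSup dm hsup]; apply iSup_le; intro w
      rw [aux_dm_iSup dm hsup]; apply iSup_le; intro hw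
      rw [hdc]
      refine le_iSup_of_le w (le_iSup_of_le ?_ le_rfl)
      rw [hw, ← hx, ← hw, hlr]
    · simp only [CodOp, DomOp]
      apply iSup_le; intro w; apply iSup_le; intro hw
      have hlv : l v = v := by rw [← hw, hlr]
      refine le_iSup_of_le v (le_iSup_of_le hlv ?_)
      rw [← hdc (f w)]
      apply aux_dm_mono dm hsup
      exact le_iSup_of_le w (le_iSup_of_le hw le_rfl)
end

section
/- Let X be a local ℓr-multisemigroup and Q a unital quantale with a map dom : Q → Q satisfying dom (⨆ S) = ⨆ {dom α | α ∈ S} for every S ⊆ Q and dom (α * dom β) = dom (α * β) for all α, β. Then Dom (f ∗ g) = Dom (f ∗ Dom g) for all f, g : X → Q. Dually, if cod : Q → Q satisfies cod (⨆ S) = ⨆ {cod α | α ∈ S} and cod (cod α * β) = cod (α * β), then Cod (f ∗ g) = Cod ((Cod f) ∗ g). -/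
open Set

private lemma auxSup {Q : Type*} [CompleteLattice Q] {dm : Q → Q}
    (hdm : ∀ S : Set Q, dm (sSup S) = ⨆ α ∈ S, dm α) {ι : Sort*} (h : ι → Q) :
    dm (⨆ i, h i) = ⨆ i, dm (h i) := by
  rw [iSup, hdm, iSup_range]

private lemma auxMulL {Q : Type*} [CompleteLattice Q] [Monoid Q] [IsQuantale Q]
    (a : Q) {ι : Sort*} (h : ι → Q) : a * (⨆ i, h i) = ⨆ i, a * h i := by
  rw [iSup, mul_sSup_distrib, iSup_range]

private lemma auxMulR {Q : Type*} [CompleteLattice Q] [Monoid Q] [IsQuantale Q]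
    (a : Q) {ι : Sort*} (h : ι → Q) : (⨆ i, h i) * a = ⨆ i, h i * a := by
  rw [iSup, sSup_mul_distrib, iSup_range]

/-- Locality lifts from a local ℓr-multisemigroup `X` and a quantale `Q` with a
sup-preserving local `dom` (dually `cod`) to the convolution algebra `X → Q`. -/
theorem stmt13 {X Q : Type*} [CompleteLattice Q] [Monoid Q] [IsQuantale Q]
    (m : X → X → Set X) (l r : X → X)
    (hassoc : ∀ x y z : X, (⋃ v ∈ m y z, m x v) = ⋃ u ∈ m x y, m u z)
    (hD : ∀ x y, m x y ≠ ∅ → r x = l y)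
    (hl : ∀ x, m (l x) x = {x})
    (hr : ∀ x, m x (r x) = {x})
    (hloc : ∀ x y, r x = l y → m x y ≠ ∅)
    (dm cd : Q → Q) :
    ((∀ S : Set Q, dm (sSup S) = ⨆ α ∈ S, dm α) →
     (∀ α β, dm (α * dm β) = dm (α * β)) →
     ∀ f g : X → Q, DomOp l dm (conv m f g) = DomOp l dm (conv m f (DomOp l dm g))) ∧
    ((∀ S : Set Q, cd (sSup S) = ⨆ α ∈ S, cd α) →
     (∀ α β, cd (cd α * β) = cd (α * β)) →
     ∀ f g : X → Q, CodOp r cd (conv m f g) = CodOp r cd (conv m (CodOp r cd f) g)) := by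
  -- basic nonemptiness facts
  have hne : ∀ x y z : X, x ∈ m y z → m y z ≠ ∅ := by
    intro x y z hx h; rw [h] at hx; exact hx
  have hrl : ∀ x, r (l x) = l x := by
    intro x
    exact hD _ _ (by rw [hl]; exact Set.singleton_ne_empty x)
  have hlr : ∀ x, l (r x) = r x := by
    intro x
    exact (hD _ _ (by rw [hr]; exact Set.singleton_ne_empty x)).symm
  have hll : ∀ x, l (l x) = l x := by
    intro x
    have h3 : m (l x) (l x) ≠ ∅ := by
      have := hr (l x); rw [hrl x] at this
      rw [this]; exact Set.singleton_ne_empty _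
    rw [← hD _ _ h3, hrl]
  have hrr : ∀ x, r (r x) = r x := by
    intro x
    have h3 : m (r x) (r x) ≠ ∅ := by
      have := hl (r x); rw [hlr x] at this
      rw [this]; exact Set.singleton_ne_empty _
    rw [hD _ _ h3, hlr]
  have mems_l : ∀ x y z : X, x ∈ m y z → l x = l y := by
    intro x y z hx
    have key : (⋃ v ∈ m y z, m (l y) v) = m y z := by
      rw [hassoc (l y) y z, hl]; simp
    rw [← key] at hx
    simp only [Set.mem_iUnion] at hx
    obtain ⟨v, hv, hxv⟩ := hx
    have hlv : l v = l y := by rw [← hD _ _ (hne _ _ _ hxv), hrl]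
    rw [← hlv, hl] at hxv
    rw [hxv, hlv]
  have mems_r : ∀ x y z : X, x ∈ m y z → r x = r z := by
    intro x y z hx
    have key : (⋃ u ∈ m y z, m u (r z)) = m y z := by
      rw [← hassoc y z (r z), hr]; simp
    rw [← key] at hx
    simp only [Set.mem_iUnion] at hx
    obtain ⟨u, hu, hxu⟩ := hx
    have hru : r u = r z := by rw [hD _ _ (hne _ _ _ hxu), hlr]
    rw [← hru, hr] at hxu
    rw [hxu, hru]
  constructor
  · intro hdm hd2 f g
    funext v
    simp only [DomOp, conv, auxSup hdm, auxMulL, hd2]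
    apply le_antisymm
    · refine iSup_le fun x => iSup_le fun hx => iSup_le fun y => iSup_le fun z =>
        iSup_le fun hm => ?_
      have hry : r y = l z := hD _ _ (hne _ _ _ hm)
      have hy : y ∈ m y (l z) := by rw [← hry, hr]; exact rfl
      have hly : l y = v := by rw [← mems_l x y z hm]; exact hx
      exact le_iSup_of_le y (le_iSup_of_le hly (le_iSup_of_le y (le_iSup_of_le (l z)
        (le_iSup_of_le hy (le_iSup_of_le z (le_iSup_of_le rfl le_rfl))))))
    · refine iSup_le fun x => iSup_le fun hx => iSup_le fun y => iSup_le fun z =>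
        iSup_le fun hm => iSup_le fun w => iSup_le fun hw => ?_
      have hry : r y = l w := by
        rw [hD _ _ (hne _ _ _ hm), ← hw, hll]
      obtain ⟨x', hx'⟩ := Set.nonempty_iff_ne_empty.mpr (hloc y w hry)
      have hlx' : l x' = v := by
        rw [mems_l x' y w hx', ← mems_l x y z hm]; exact hx
      exact le_iSup_of_le x' (le_iSup_of_le hlx' (le_iSup_of_le y (le_iSup_of_le w
        (le_iSup_of_le hx' le_rfl))))
  · intro hcd hc2 f g
    funext v
    simp only [CodOp, conv, auxSup hcd, auxMulR, hc2]
    apply le_antisymm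
    · refine iSup_le fun x => iSup_le fun hx => iSup_le fun y => iSup_le fun z =>
        iSup_le fun hm => ?_
      have hry : r y = l z := hD _ _ (hne _ _ _ hm)
      have hz : z ∈ m (r y) z := by rw [hry, hl]; exact rfl
      have hrz : r z = v := by rw [← mems_r x y z hm]; exact hx
      exact le_iSup_of_le z (le_iSup_of_le hrz (le_iSup_of_le (r y) (le_iSup_of_le z
        (le_iSup_of_le hz (le_iSup_of_le y (le_iSup_of_le rfl le_rfl))))))
    · refine iSup_le fun x => iSup_le fun hx => iSup_le fun y => iSup_le fun z =>
        iSup_le fun hm => iSup_le fun w => iSup_le fun hw => ?_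
      have hrw : r w = l z := by
        rw [← hD _ _ (hne _ _ _ hm), ← hw, hrr]
      obtain ⟨x', hx'⟩ := Set.nonempty_iff_ne_empty.mpr (hloc w z hrw)
      have hrx' : r x' = v := by
        rw [mems_r x' w z hx', ← mems_r x y z hm]; exact hx
      exact le_iSup_of_le x' (le_iSup_of_le hrx' (le_iSup_of_le w (le_iSup_of_le z
        (le_iSup_of_le hx' le_rfl))))
end

section
/- Let X be a set with a multioperation ⊙ : X → X → Set X and maps ℓ, r : X → X, and let Q be a unital quantale with 1 ≠ ⊥ and maps dom, cod : Q → Q satisfying dom 1 = 1, dom ⊥ = ⊥, cod 1 = 1 and cod ⊥ = ⊥. If Dom (δ_x ∗ Dom δ_y) = Dom (δ_x ∗ δ_y) for all x, y ∈ X, then ℓ(x ⊙ ℓ y) = ℓ(x ⊙ y) for all x, y (where ℓ is applied to sets as an image); dually, if Cod ((Cod δ_x) ∗ δ_y) = Cod (δ_x ∗ δ_y) for all x, y, then r((r x) ⊙ y) = r(x ⊙ y) for all x, y. In particular, if (X,⊙,ℓ,r) is an ℓr-multisemigroup and these equations hold, then X is local. -/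
open Set

/-- `δ_x y = 1` if `y = x` and `⊥` otherwise. -/
noncomputable def delta {X Q : Type*} [CompleteLattice Q] [One Q] (x : X) : X → Q :=
  fun y => letI := Classical.dec (y = x); if y = x then 1 else ⊥

noncomputable def ind {X Q : Type*} [CompleteLattice Q] [One Q] (A : Set X) : X → Q :=
  fun v => letI := Classical.dec (v ∈ A); if v ∈ A then 1 else ⊥

lemma delta_eq_ind {X Q : Type*} [CompleteLattice Q] [One Q] (x : X) :
    (delta x : X → Q) = ind {x} := by
  funext v
  by_cases h : v = x <;> simp [delta, ind, h]

lemma q_mul_bot {Q : Type*} [CompleteLattice Q] [Semigroup Q] [IsQuantale Q] (a : Q) :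
    a * ⊥ = ⊥ := by
  have : a * sSup (∅ : Set Q) = ⨆ y ∈ (∅ : Set Q), a * y := mul_sSup_distrib
  simpa using this

lemma q_bot_mul {Q : Type*} [CompleteLattice Q] [Semigroup Q] [IsQuantale Q] (a : Q) :
    ⊥ * a = ⊥ := by
  have : sSup (∅ : Set Q) * a = ⨆ y ∈ (∅ : Set Q), y * a := sSup_mul_distrib
  simpa using this

lemma conv_ind {X Q : Type*} [CompleteLattice Q] [Monoid Q] [IsQuantale Q]
    (m : X → X → Set X) (hQ : (1 : Q) ≠ ⊥) (A B : Set X) :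
    conv m (ind A : X → Q) (ind B) = ind (⋃ a ∈ A, ⋃ b ∈ B, m a b) := by
  funext u
  classical
  simp only [conv, ind]
  by_cases hu : u ∈ ⋃ a ∈ A, ⋃ b ∈ B, m a b
  · simp only [hu, if_pos]
    obtain ⟨a, ha, b, hb, hm⟩ := by simpa using hu
    apply le_antisymm
    · refine iSup_le fun y => iSup_le fun z => iSup_le fun _ => ?_
      split_ifs <;> simp [q_mul_bot, q_bot_mul]
    · calc (1 : Q) = (if a ∈ A then (1:Q) else ⊥) * (if b ∈ B then (1:Q) else ⊥) := by
            simp [ha, hb]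
        _ ≤ _ := le_iSup_of_le a (le_iSup_of_le b (le_iSup (fun _ : u ∈ m a b => _) hm))
  · simp only [hu, if_neg, not_false_iff]
    refine le_bot_iff.mp (iSup_le fun y => iSup_le fun z => iSup_le fun hm => ?_)
    by_cases hy : y ∈ A
    · by_cases hz : z ∈ B
      · exact absurd (by simp only [mem_iUnion]; exact ⟨y, hy, z, hz, hm⟩) hu
      · simp [hz, q_mul_bot]
    · simp [hy, q_bot_mul]

lemma domOp_ind {X Q : Type*} [CompleteLattice Q] [One Q]
    (l : X → X) (dm : Q → Q) (hdm1 : dm 1 = 1) (hdmbot : dm ⊥ = ⊥) (A : Set X) :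
    DomOp l dm (ind A : X → Q) = ind (l '' A) := by
  funext v
  classical
  simp only [DomOp, ind]
  by_cases hv : v ∈ l '' A
  · simp only [hv, if_pos]
    obtain ⟨a, ha, hla⟩ := hv
    apply le_antisymm
    · refine iSup_le fun x => iSup_le fun _ => ?_
      split_ifs <;> simp [hdm1, hdmbot]
    · calc (1:Q) = dm (if a ∈ A then (1:Q) else ⊥) := by simp [ha, hdm1]
        _ ≤ _ := le_iSup_of_le a (le_iSup (fun _ : l a = v => _) hla)
  · simp only [hv, if_neg, not_false_iff]
    refine le_bot_iff.mp (iSup_le fun x => iSup_le fun hx => ?_)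
    have hxA : x ∉ A := fun h => hv ⟨x, h, hx⟩
    simp [hxA, hdmbot]

lemma ind_inj {X Q : Type*} [CompleteLattice Q] [One Q] (hQ : (1 : Q) ≠ ⊥)
    {A B : Set X} (h : (ind A : X → Q) = ind B) : A = B := by
  ext v
  classical
  have := congrFun h v
  simp only [ind] at this
  constructor <;> intro hv
  · by_contra hB
    rw [if_pos hv, if_neg hB] at this; exact hQ this
  · by_contra hA
    rw [if_neg hA, if_pos hv] at this; exact hQ this.symm

lemma biUnion_singleton' {X : Type*} (m : X → X → Set X) (a b : X) :
    (⋃ x ∈ ({a} : Set X), ⋃ y ∈ ({b} : Set X), m x y) = m a b := by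
  simp

/-- Correspondence from a quantale `Q` and the convolution algebra `X → Q` down to `X`:
locality of `Dom` (resp. `Cod`) in `X → Q` forces the equational locality laws in `X`;
in particular an ℓr-multisemigroup satisfying these equations is local. -/
theorem stmt14 {X Q : Type*} [CompleteLattice Q] [Monoid Q] [IsQuantale Q]
    (m : X → X → Set X) (l r : X → X)
    (dm cd : Q → Q)
    (hQ : (1 : Q) ≠ ⊥)
    (hdm1 : dm 1 = 1) (hdmbot : dm ⊥ = ⊥)
    (hcd1 : cd 1 = 1) (hcdbot : cd ⊥ = ⊥) :
    ((∀ x y : X,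
        DomOp l dm (conv m (delta x) (DomOp l dm (delta y))) =
          DomOp l dm (conv m (delta x) (delta y))) →
      ∀ x y : X, l '' (m x (l y)) = l '' (m x y)) ∧
    ((∀ x y : X,
        CodOp r cd (conv m (CodOp r cd (delta x)) (delta y)) =
          CodOp r cd (conv m (delta x) (delta y))) →
      ∀ x y : X, r '' (m (r x) y) = r '' (m x y)) ∧
    ((∀ x y z : X, (⋃ v ∈ m y z, m x v) = ⋃ u ∈ m x y, m u z) →
     (∀ x y, m x y ≠ ∅ → r x = l y) →
     (∀ x, m (l x) x = {x}) →
     (∀ x, m x (r x) = {x}) →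
     (∀ x y : X,
        DomOp l dm (conv m (delta x) (DomOp l dm (delta y))) =
          DomOp l dm (conv m (delta x) (delta y))) →
     (∀ x y : X,
        CodOp r cd (conv m (CodOp r cd (delta x)) (delta y)) =
          CodOp r cd (conv m (delta x) (delta y))) →
     ∀ x y : X, r x = l y → m x y ≠ ∅) := by
  have codOp_ind : ∀ (A : Set X), CodOp r cd (ind A : X → Q) = ind (r '' A) :=
    fun A => domOp_ind r cd hcd1 hcdbot A
  have hdomloc : (∀ x y : X,
        DomOp l dm (conv m (delta x) (DomOp l dm (delta y))) =
          DomOp l dm (conv m (delta x) (delta y))) →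
      ∀ x y : X, l '' (m x (l y)) = l '' (m x y) := by
    intro h x y
    have hh := h x y
    rw [delta_eq_ind, delta_eq_ind, domOp_ind l dm hdm1 hdmbot,
        image_singleton, conv_ind m hQ, conv_ind m hQ,
        biUnion_singleton' m, biUnion_singleton' m,
        domOp_ind l dm hdm1 hdmbot, domOp_ind l dm hdm1 hdmbot] at hh
    exact ind_inj hQ hh
  have hcodloc : (∀ x y : X,
        CodOp r cd (conv m (CodOp r cd (delta x)) (delta y)) =
          CodOp r cd (conv m (delta x) (delta y))) →
      ∀ x y : X, r '' (m (r x) y) = r '' (m x y) := by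
    intro h x y
    have hh := h x y
    rw [delta_eq_ind, delta_eq_ind, codOp_ind,
        image_singleton, conv_ind m hQ, conv_ind m hQ,
        biUnion_singleton' m, biUnion_singleton' m,
        codOp_ind, codOp_ind] at hh
    exact ind_inj hQ hh
  refine ⟨hdomloc, hcodloc, ?_⟩
  intro _ _ _ hxr hdom _ x y hrl
  have h1 := hdomloc hdom x y
  rw [← hrl, hxr x, image_singleton] at h1
  intro hemp
  rw [hemp] at h1
  simp at h1
end

section
/- In any modal quantale Q, for every α ∈ Q and all domain elements ρ, σ (i.e. dom ρ = ρ and dom σ = σ): ρ * |α⟩σ = ⊥ if and only if (⟨α|ρ) * σ = ⊥. -/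
/-- Conjugation between forward and backward diamonds in a modal quantale:
`ρ * |α⟩σ = ⊥ ↔ (⟨α|ρ) * σ = ⊥` for domain elements `ρ, σ`. -/
theorem stmt16 {Q : Type*} [CompleteLattice Q] [Monoid Q] [IsQuantale Q]
    (dm cd : Q → Q)
    (hd1 : ∀ α, α ≤ dm α * α)
    (hd2 : ∀ α β, dm (α * dm β) = dm (α * β))
    (hd3 : ∀ α, dm α ≤ 1)
    (hd4 : dm ⊥ = ⊥)
    (hd5 : ∀ α β, dm (α ⊔ β) = dm α ⊔ dm β)
    (hc1 : ∀ α, α ≤ α * cd α)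
    (hc2 : ∀ α β, cd (cd α * β) = cd (α * β))
    (hc3 : ∀ α, cd α ≤ 1)
    (hc4 : cd ⊥ = ⊥)
    (hc5 : ∀ α β, cd (α ⊔ β) = cd α ⊔ cd β)
    (hdc : ∀ α, dm (cd α) = cd α)
    (hcd : ∀ α, cd (dm α) = dm α) :
    ∀ α ρ σ : Q, dm ρ = ρ → dm σ = σ →
      (ρ * dm (α * σ) = ⊥ ↔ cd (ρ * α) * σ = ⊥) := by
  have keyd : ∀ x : Q, x = ⊥ ↔ dm x = ⊥ := fun x =>
    ⟨fun h => h ▸ hd4, fun h => le_bot_iff.mp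
      ((hd1 x).trans (by rw [h]; simpa using (IsQuantale.sSup_mul_distrib (∅ : Set Q) x).le))⟩
  have keyc : ∀ x : Q, x = ⊥ ↔ cd x = ⊥ := fun x =>
    ⟨fun h => h ▸ hc4, fun h => le_bot_iff.mp
      ((hc1 x).trans (by rw [h]; simpa using (IsQuantale.mul_sSup_distrib x (∅ : Set Q)).le))⟩
  intro α ρ σ _ _
  rw [keyd, hd2, keyc (cd (ρ * α) * σ), hc2, ← keyd, ← keyc, mul_assoc]
end

section
/- In any modal quantale Q, for every α ∈ Q and all domain elements ρ, σ (dom ρ = ρ, dom σ = σ): |α⟩ρ ≤ σ if and only if α * ρ ≤ σ * α, and ⟨α|ρ ≤ σ if and only if ρ * α ≤ α * σ. -/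
/-- In a modal quantale, for all domain elements `ρ, σ`:
`|α⟩ρ ≤ σ ↔ α * ρ ≤ σ * α` and `⟨α|ρ ≤ σ ↔ ρ * α ≤ α * σ`. -/
theorem stmt18 {Q : Type*} [CompleteLattice Q] [Monoid Q] [IsQuantale Q]
    (dm cd : Q → Q)
    (hd1 : ∀ α, α ≤ dm α * α)
    (hd2 : ∀ α β, dm (α * dm β) = dm (α * β))
    (hd3 : ∀ α, dm α ≤ 1)
    (hd4 : dm ⊥ = ⊥)
    (hd5 : ∀ α β, dm (α ⊔ β) = dm α ⊔ dm β)
    (hc1 : ∀ α, α ≤ α * cd α)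
    (hc2 : ∀ α β, cd (cd α * β) = cd (α * β))
    (hc3 : ∀ α, cd α ≤ 1)
    (hc4 : cd ⊥ = ⊥)
    (hc5 : ∀ α β, cd (α ⊔ β) = cd α ⊔ cd β)
    (hdc : ∀ α, dm (cd α) = cd α)
    (hcd : ∀ α, cd (dm α) = dm α) :
    ∀ α ρ σ : Q, dm ρ = ρ → dm σ = σ →
      (dm (α * ρ) ≤ σ ↔ α * ρ ≤ σ * α) ∧
      (cd (ρ * α) ≤ σ ↔ ρ * α ≤ α * σ) := by
  intro α ρ σ hρ hσ
  have dmono : ∀ a b : Q, a ≤ b → dm a ≤ dm b := by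
    intro a b h
    have : dm (a ⊔ b) = dm a ⊔ dm b := hd5 a b
    rw [sup_eq_right.mpr h] at this
    exact le_sup_left.trans this.ge
  have cmono : ∀ a b : Q, a ≤ b → cd a ≤ cd b := by
    intro a b h
    have : cd (a ⊔ b) = cd a ⊔ cd b := hc5 a b
    rw [sup_eq_right.mpr h] at this
    exact le_sup_left.trans this.ge
  have hρ1 : ρ ≤ 1 := hρ ▸ hd3 ρ
  have hcσ : cd σ = σ := by rw [← hσ, hcd, hσ]
  constructor
  · constructor
    · intro h
      calc α * ρ ≤ dm (α * ρ) * (α * ρ) := hd1 _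
        _ ≤ σ * (α * ρ) := mul_le_mul_left h _
        _ ≤ σ * (α * 1) := mul_le_mul_right (mul_le_mul_right hρ1 _) _
        _ = σ * α := by rw [mul_one]
    · intro h
      calc dm (α * ρ) ≤ dm (σ * α) := dmono _ _ h
        _ = dm (σ * dm α) := (hd2 _ _).symm
        _ ≤ dm (σ * 1) := dmono _ _ (mul_le_mul_right (hd3 α) _)
        _ = σ := by rw [mul_one, hσ]
  · constructor
    · intro h
      calc ρ * α ≤ (ρ * α) * cd (ρ * α) := hc1 _
        _ ≤ (ρ * α) * σ := mul_le_mul_right h _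
        _ ≤ (1 * α) * σ := mul_le_mul_left (mul_le_mul_left hρ1 _) _
        _ = α * σ := by rw [one_mul]
    · intro h
      calc cd (ρ * α) ≤ cd (α * σ) := cmono _ _ h
        _ = cd (cd α * σ) := (hc2 _ _).symm
        _ ≤ cd (1 * σ) := cmono _ _ (mul_le_mul_left (hc3 α) _)
        _ = σ := by rw [one_mul, hcσ]
end

section
/- Let X be a local ℓr-multisemigroup and Q a unital quantale. Define Dom' : (X → Q) → (X → Q) by (Dom' f) v = ⨆ {f y | ℓ y = v} and Cod' by (Cod' f) v = ⨆ {f y | r y = v}. Then for all f, g : X → Q: Dom' (f ∗ g) = Dom' (f ∗ Dom' g), Dom' ((Dom' f) ∗ g) = (Dom' f) ∗ (Dom' g), and dually Cod' (f ∗ g) = Cod' ((Cod' f) ∗ g) and Cod' (f ∗ (Cod' g)) = (Cod' f) ∗ (Cod' g). -/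
open Set

/-- `(Dom' f) v = ⨆ {f y | ℓ y = v}`. -/
def Dom' {X Q : Type*} [CompleteLattice Q] (l : X → X) (f : X → Q) : X → Q :=
  fun v => ⨆ y, ⨆ _ : l y = v, f y

/-- `(Cod' f) v = ⨆ {f y | r y = v}`. -/
def Cod' {X Q : Type*} [CompleteLattice Q] (r : X → X) (f : X → Q) : X → Q :=
  fun v => ⨆ y, ⨆ _ : r y = v, f y

lemma mul_iSup' {Q : Type*} [CompleteLattice Q] [Semigroup Q] [IsQuantale Q]
    {ι : Sort*} (x : Q) (f : ι → Q) : x * (⨆ i, f i) = ⨆ i, x * f i := by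
  rw [iSup, mul_sSup_distrib, iSup_range]

lemma iSup_mul' {Q : Type*} [CompleteLattice Q] [Semigroup Q] [IsQuantale Q]
    {ι : Sort*} (x : Q) (f : ι → Q) : (⨆ i, f i) * x = ⨆ i, f i * x := by
  rw [iSup, sSup_mul_distrib, iSup_range]

section helpers
variable {X : Type*} (m : X → X → Set X) (l r : X → X)
    (hassoc : ∀ x y z : X, (⋃ v ∈ m y z, m x v) = ⋃ u ∈ m x y, m u z)
    (hD : ∀ x y, m x y ≠ ∅ → r x = l y)
    (hl : ∀ x, m (l x) x = {x})
    (hr : ∀ x, m x (r x) = {x})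

include hD hl in
lemma hlr' : ∀ a, r (l a) = l a := fun a =>
  hD _ _ (by rw [hl a]; exact (singleton_nonempty a).ne_empty)

include hD hr in
lemma hrl' : ∀ a, l (r a) = r a := fun a =>
  (hD _ _ (by rw [hr a]; exact (singleton_nonempty a).ne_empty)).symm

include hD hl hr in
lemma mll' : ∀ a, m (l a) (l a) = {l a} := by
  intro a
  nth_rewrite 2 [← hlr' m l r hD hl a]
  exact hr (l a)

include hD hl hr in
lemma mrr' : ∀ a, m (r a) (r a) = {r a} := by
  intro a
  nth_rewrite 1 [← hrl' m l r hD hr a]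
  exact hl (r a)

include hD hl hr in
lemma hll' : ∀ a, l (l a) = l a := by
  intro a
  have := hD (l a) (l a) (by rw [mll' m l r hD hl hr a]; exact (singleton_nonempty _).ne_empty)
  rw [hlr' m l r hD hl a] at this
  exact this.symm

include hD hl hr in
lemma hrr' : ∀ a, r (r a) = r a := by
  intro a
  have := hD (r a) (r a) (by rw [mrr' m l r hD hl hr a]; exact (singleton_nonempty _).ne_empty)
  rw [hrl' m l r hD hr a] at this
  exact this

include hassoc hD hl hr in
lemma key1 : ∀ {x a b}, x ∈ m a b → l x = l a := by
  intro x a b hx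
  have h1 : (⋃ v ∈ m a b, m (l a) v) = m a b := by
    rw [hassoc, hl, Set.biUnion_singleton]
  rw [← h1] at hx
  simp only [Set.mem_iUnion] at hx
  obtain ⟨v, hv, hx2⟩ := hx
  have h2 : x ∈ ⋃ u ∈ m (l x) (l a), m u v := by
    rw [← hassoc]
    exact Set.mem_biUnion hx2 (by rw [hl x]; exact rfl)
  simp only [Set.mem_iUnion] at h2
  obtain ⟨u, hu, _⟩ := h2
  have h3 := hD (l x) (l a) (Set.nonempty_of_mem hu).ne_empty
  rw [hlr' m l r hD hl x] at h3
  rw [h3]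
  exact hll' m l r hD hl hr a

include hassoc hD hl hr in
lemma key2 : ∀ {x a b}, x ∈ m a b → r x = r b := by
  intro x a b hx
  have h1 : (⋃ u ∈ m a b, m u (r b)) = m a b := by
    rw [← hassoc, hr, Set.biUnion_singleton]
  rw [← h1] at hx
  simp only [Set.mem_iUnion] at hx
  obtain ⟨u, hu, hx2⟩ := hx
  have h2 : x ∈ ⋃ v ∈ m (r b) (r x), m u v := by
    rw [hassoc]
    exact Set.mem_biUnion hx2 (by rw [hr x]; exact rfl)
  simp only [Set.mem_iUnion] at h2
  obtain ⟨v, hv, _⟩ := h2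
  have h3 := hD (r b) (r x) (Set.nonempty_of_mem hv).ne_empty
  rw [hrr' m l r hD hl hr b, hrl' m l r hD hr x] at h3
  exact h3.symm

end helpers

/-- For a local ℓr-multisemigroup `X` and a unital quantale `Q`, the liberal domain and
codomain operations `Dom'` and `Cod'` satisfy the locality and export laws on `X → Q`. -/
theorem stmt19 {X Q : Type*} [CompleteLattice Q] [Monoid Q] [IsQuantale Q]
    (m : X → X → Set X) (l r : X → X)
    (hassoc : ∀ x y z : X, (⋃ v ∈ m y z, m x v) = ⋃ u ∈ m x y, m u z)
    (hD : ∀ x y, m x y ≠ ∅ → r x = l y)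
    (hl : ∀ x, m (l x) x = {x})
    (hr : ∀ x, m x (r x) = {x})
    (hloc : ∀ x y, r x = l y → m x y ≠ ∅) :
    (∀ f g : X → Q, Dom' l (conv m f g) = Dom' l (conv m f (Dom' l g))) ∧
    (∀ f g : X → Q, Dom' l (conv m (Dom' l f) g) = conv m (Dom' l f) (Dom' l g)) ∧
    (∀ f g : X → Q, Cod' r (conv m f g) = Cod' r (conv m (Cod' r f) g)) ∧
    (∀ f g : X → Q, Cod' r (conv m f (Cod' r g)) = conv m (Cod' r f) (Cod' r g)) := by
  have K1 : ∀ {x a b : X}, x ∈ m a b → l x = l a :=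
    fun h => key1 m l r hassoc hD hl hr h
  have K2 : ∀ {x a b : X}, x ∈ m a b → r x = r b :=
    fun h => key2 m l r hassoc hD hl hr h
  have Hlr := hlr' m l r hD hl
  have Hrl := hrl' m l r hD hr
  have Hll := hll' m l r hD hl hr
  have Hrr := hrr' m l r hD hl hr
  have Mll := mll' m l r hD hl hr
  have Mrr := mrr' m l r hD hl hr
  refine ⟨?_, ?_, ?_, ?_⟩
  · -- Dom' (f ∗ g) = Dom' (f ∗ Dom' g)
    intro f g
    funext v
    simp only [conv, Dom', mul_iSup', iSup_mul']
    apply le_antisymm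
    · simp only [iSup_le_iff]
      intro y hy a b hab
      have hra : r a = l b := hD a b (Set.nonempty_of_mem hab).ne_empty
      have hmem : a ∈ m a (l b) := by rw [← hra, hr a]; exact rfl
      have hv : l a = v := (K1 hab) ▸ hy
      exact le_iSup_of_le a (le_iSup_of_le hv (le_iSup_of_le a (le_iSup_of_le (l b)
        (le_iSup_of_le hmem (le_iSup_of_le b (le_iSup_of_le rfl le_rfl))))))
    · simp only [iSup_le_iff]
      intro y hy a z hyz c hcz
      subst hcz
      have hra : r a = l c := by
        have := hD a (l c) (Set.nonempty_of_mem hyz).ne_empty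
        rwa [Hll c] at this
      obtain ⟨x, hx⟩ := Set.nonempty_iff_ne_empty.mpr (hloc a c hra)
      have hv : l x = v := by rw [K1 hx, ← K1 hyz, hy]
      exact le_iSup_of_le x (le_iSup_of_le hv (le_iSup_of_le a (le_iSup_of_le c
        (le_iSup_of_le hx le_rfl))))
  · -- Dom' (Dom' f ∗ g) = Dom' f ∗ Dom' g
    intro f g
    funext v
    simp only [conv, Dom', mul_iSup', iSup_mul']
    apply le_antisymm
    · simp only [iSup_le_iff]
      intro y hy p z hm a hap
      subst hap
      have hlz : l z = l a := by
        have := hD (l a) z (Set.nonempty_of_mem hm).ne_empty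
        rw [Hlr a] at this; exact this.symm
      have hv : l a = v := by rw [← Hll a, ← K1 hm, hy]
      have hmem : v ∈ m (l a) (l z) := by
        rw [hlz, Mll a, ← hv]; exact rfl
      exact le_iSup_of_le (l a) (le_iSup_of_le (l z) (le_iSup_of_le hmem
        (le_iSup_of_le z (le_iSup_of_le rfl (le_iSup_of_le a (le_iSup_of_le rfl le_rfl))))))
    · simp only [iSup_le_iff]
      intro p q hv b hbq a hap
      subst hbq; subst hap
      have hab : l b = l a := by
        have := hD (l a) (l b) (Set.nonempty_of_mem hv).ne_empty
        rw [Hlr a, Hll b] at this; exact this.symm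
      have hveq : v = l a := by
        rw [hab, Mll a] at hv; exact hv
      obtain ⟨y, hy⟩ := Set.nonempty_iff_ne_empty.mpr
        (hloc (l a) b (by rw [Hlr a, hab]))
      have hyv : l y = v := by rw [K1 hy, Hll a, hveq]
      exact le_iSup_of_le y (le_iSup_of_le hyv (le_iSup_of_le (l a) (le_iSup_of_le b
        (le_iSup_of_le hy (le_iSup_of_le a (le_iSup_of_le rfl le_rfl))))))
  · -- Cod' (f ∗ g) = Cod' (Cod' f ∗ g)
    intro f g
    funext v
    simp only [conv, Cod', mul_iSup', iSup_mul']
    apply le_antisymm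
    · simp only [iSup_le_iff]
      intro y hy a b hab
      have hra : r a = l b := hD a b (Set.nonempty_of_mem hab).ne_empty
      have hmem : b ∈ m (r a) b := by rw [hra, hl b]; exact rfl
      have hv : r b = v := (K2 hab) ▸ hy
      exact le_iSup_of_le b (le_iSup_of_le hv (le_iSup_of_le (r a) (le_iSup_of_le b
        (le_iSup_of_le hmem (le_iSup_of_le a (le_iSup_of_le rfl le_rfl))))))
    · simp only [iSup_le_iff]
      intro y hy p b hyb a hap
      subst hap
      have hra : r a = l b := by
        have := hD (r a) b (Set.nonempty_of_mem hyb).ne_empty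
        rwa [Hrr a] at this
      obtain ⟨x, hx⟩ := Set.nonempty_iff_ne_empty.mpr (hloc a b hra)
      have hv : r x = v := by rw [K2 hx, ← K2 hyb, hy]
      exact le_iSup_of_le x (le_iSup_of_le hv (le_iSup_of_le a (le_iSup_of_le b
        (le_iSup_of_le hx le_rfl))))
  · -- Cod' (f ∗ Cod' g) = Cod' f ∗ Cod' g
    intro f g
    funext v
    simp only [conv, Cod', mul_iSup', iSup_mul']
    apply le_antisymm
    · simp only [iSup_le_iff]
      intro y hy a q hm c hcq
      subst hcq
      have hrc : r a = r c := by
        have := hD a (r c) (Set.nonempty_of_mem hm).ne_empty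
        rwa [Hrl c] at this
      have hv : r c = v := by rw [← Hrr c, ← K2 hm, hy]
      have hmem : v ∈ m (r a) (r c) := by
        rw [hrc, Mrr c, ← hv]; exact rfl
      exact le_iSup_of_le (r a) (le_iSup_of_le (r c) (le_iSup_of_le hmem
        (le_iSup_of_le c (le_iSup_of_le rfl (le_iSup_of_le a (le_iSup_of_le rfl le_rfl))))))
    · simp only [iSup_le_iff]
      intro p q hv c hcq a hap
      subst hcq; subst hap
      have hac : r a = r c := by
        have := hD (r a) (r c) (Set.nonempty_of_mem hv).ne_empty
        rwa [Hrr a, Hrl c] at this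
      have hveq : v = r c := by
        rw [hac, Mrr c] at hv; exact hv
      obtain ⟨y, hy⟩ := Set.nonempty_iff_ne_empty.mpr
        (hloc a (r c) (by rw [Hrl c, hac]))
      have hyv : r y = v := by rw [K2 hy, Hrr c, hveq]
      exact le_iSup_of_le y (le_iSup_of_le hyv (le_iSup_of_le a (le_iSup_of_le (r c)
        (le_iSup_of_le hy (le_iSup_of_le c (le_iSup_of_le rfl le_rfl))))))
end
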